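/- arXiv:2503.10764 — 7 statements merged into one kernel-verified Lean document; each statement's English description precedes it below -/
import Mathlib

section
/- Any bipartite pure state is bipartite non-chiral: for any unit vector ψ ∈ ℂ^{d_A} ⊗ ℂ^{d_B} there exist unitaries U_A, U_B such that (U_A ⊗ U_B)ψ = ψ*, where ψ* denotes entrywise complex conjugation in a product basis. -/
open Matrix Kronecker BigOperators
open scoped ComplexOrder

noncomputable section

/-- Entrywise complex conjugation of a matrix (in the fixed basis). -/
def conjM {α : Type*} (ρ : Matrix α α ℂ) : Matrix α α ℂ := ρ.map (starRingEnd ℂ)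

/-- A matrix is unitary. -/
def IsUnitary {α : Type*} [Fintype α] [DecidableEq α] (U : Matrix α α ℂ) : Prop :=
  U * Uᴴ = 1 ∧ Uᴴ * U = 1

/-- A density matrix: positive semidefinite with unit trace. -/
def IsDensity {α : Type*} [Fintype α] [DecidableEq α] (ρ : Matrix α α ℂ) : Prop :=
  ρ.PosSemidef ∧ ρ.trace = 1

/-- Partial trace over the second tensor factor. -/
def traceB {α β : Type*} [Fintype β] (ρ : Matrix (α × β) (α × β) ℂ) : Matrix α α ℂ :=
  fun a a' => ∑ b, ρ (a, b) (a', b)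

/-- Partial trace over the first tensor factor. -/
def traceA {α β : Type*} [Fintype α] (ρ : Matrix (α × β) (α × β) ℂ) : Matrix β β ℂ :=
  fun b b' => ∑ a, ρ (a, b) (a, b')

lemma inner_toEuclideanLin_self {m n : Type*} [Fintype m] [Fintype n] [DecidableEq n]
    (A : Matrix m n ℂ) (x : EuclideanSpace ℂ n) :
    inner (𝕜 := ℂ) (Matrix.toEuclideanLin A x) (Matrix.toEuclideanLin A x) =
      dotProduct (star (WithLp.equiv 2 (n → ℂ) x))
        ((Aᴴ * A) *ᵥ (WithLp.equiv 2 (n → ℂ) x)) := by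
  rw [EuclideanSpace.inner_eq_star_dotProduct, dotProduct_comm, Matrix.toEuclideanLin_apply]
  simp only [Equiv.apply_symm_apply]
  rw [Matrix.star_mulVec, ← Matrix.mulVec_mulVec, Matrix.dotProduct_mulVec,
    Matrix.dotProduct_mulVec, Matrix.dotProduct_mulVec]
  rfl

lemma exists_unitary_mul_eq {m n : Type*} [Fintype m] [Fintype n] [DecidableEq m] [DecidableEq n]
    (A B : Matrix m n ℂ) (h : Aᴴ * A = Bᴴ * B) :
    ∃ U : Matrix m m ℂ, U * Uᴴ = 1 ∧ Uᴴ * U = 1 ∧ U * A = B := by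
  set fA := Matrix.toEuclideanLin A with hfA
  set fB := Matrix.toEuclideanLin B with hfB
  have hinner : ∀ x, inner (𝕜 := ℂ) (fA x) (fA x) = inner (𝕜 := ℂ) (fB x) (fB x) := by
    intro x
    rw [hfA, hfB, inner_toEuclideanLin_self, inner_toEuclideanLin_self, h]
  have hnorm : ∀ x, ‖fA x‖ = ‖fB x‖ := by
    intro x
    have h2 : (‖fA x‖ : ℂ) ^ 2 = (‖fB x‖ : ℂ) ^ 2 := by
      have := hinner x
      rwa [inner_self_eq_norm_sq_to_K, inner_self_eq_norm_sq_to_K] at this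
    have h3 : ‖fA x‖ ^ 2 = ‖fB x‖ ^ 2 := by exact_mod_cast h2
    have := sq_abs (‖fA x‖)
    nlinarith [norm_nonneg (fA x), norm_nonneg (fB x)]
  have hker : LinearMap.ker fA ≤ LinearMap.ker fB := by
    intro x hx
    rw [LinearMap.mem_ker] at hx ⊢
    have : ‖fB x‖ = 0 := by rw [← hnorm, hx, norm_zero]
    exact norm_eq_zero.mp this
  set g : (EuclideanSpace ℂ n ⧸ LinearMap.ker fA) →ₗ[ℂ] EuclideanSpace ℂ m :=
    Submodule.liftQ (LinearMap.ker fA) fB hker with hg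
  set L : LinearMap.range fA →ₗ[ℂ] EuclideanSpace ℂ m :=
    g ∘ₗ (fA.quotKerEquivRange.symm : LinearMap.range fA →ₗ[ℂ] _) with hL
  have hLval : ∀ (x : EuclideanSpace ℂ n) (hx : fA x ∈ LinearMap.range fA),
      L ⟨fA x, hx⟩ = fB x := by
    intro x hx
    rw [hL]
    simp only [LinearMap.coe_comp, Function.comp_apply, LinearEquiv.coe_coe]
    rw [LinearMap.quotKerEquivRange_symm_apply_image]
    rw [hg]
    simp [Submodule.mkQ_apply]
  have hLnorm : ∀ v : LinearMap.range fA, ‖L v‖ = ‖v‖ := by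
    rintro ⟨w, x, rfl⟩
    exact (congrArg norm (hLval x (LinearMap.mem_range_self _ x))).trans (hnorm x).symm
  set L0 : LinearMap.range fA →ₗᵢ[ℂ] EuclideanSpace ℂ m := ⟨L, hLnorm⟩ with hL0
  set U' := L0.extend with hU'
  set U := Matrix.toEuclideanLin.symm U'.toLinearMap with hU
  have hUU' : Matrix.toEuclideanLin U = U'.toLinearMap := by
    rw [hU]; exact Matrix.toEuclideanLin.apply_symm_apply _
  have hUfA : ∀ x, Matrix.toEuclideanLin U (fA x) = fB x := by
    intro x
    rw [hUU']
    have hmem : fA x ∈ LinearMap.range fA := LinearMap.mem_range_self _ x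
    have : U'.toLinearMap (fA x) = U' ((⟨fA x, hmem⟩ : LinearMap.range fA) : EuclideanSpace ℂ m) := rfl
    rw [this, hU', LinearIsometry.extend_apply]
    exact hLval x hmem
  have hmulLin : ∀ (X : Matrix m m ℂ) (Y : Matrix m n ℂ),
      Matrix.toEuclideanLin (X * Y) = (Matrix.toEuclideanLin X) ∘ₗ (Matrix.toEuclideanLin Y) := by
    intro X Y
    apply LinearMap.ext
    intro x
    simp [Matrix.toEuclideanLin_apply, Matrix.mulVec_mulVec]
  have hUAB : U * A = B := by
    apply Matrix.toEuclideanLin.injective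
    rw [hmulLin]
    apply LinearMap.ext
    intro x
    exact hUfA x
  have hc : ∀ v, Matrix.toEuclideanLin U v = U' v := by
    intro v; rw [hUU']; rfl
  have h2 : ∀ p : m → ℂ, (WithLp.equiv 2 (m → ℂ)).symm (U *ᵥ p)
      = U' ((WithLp.equiv 2 (m → ℂ)).symm p) := by
    intro p
    rw [← hc, Matrix.toEuclideanLin_apply]; rfl
  have hUunit : Uᴴ * U = 1 := by
    ext i j
    have key : dotProduct (star (U *ᵥ Pi.single i (1:ℂ))) (U *ᵥ Pi.single j (1:ℂ))
        = dotProduct (star (Pi.single i (1:ℂ))) (Pi.single j (1:ℂ)) := by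
      calc dotProduct (star (U *ᵥ Pi.single i (1:ℂ))) (U *ᵥ Pi.single j (1:ℂ))
          = inner (𝕜 := ℂ) ((WithLp.equiv 2 (m → ℂ)).symm (U *ᵥ Pi.single i (1:ℂ)))
              ((WithLp.equiv 2 (m → ℂ)).symm (U *ᵥ Pi.single j (1:ℂ))) :=
            by rw [dotProduct_comm]; rfl
        _ = inner (𝕜 := ℂ) (U' ((WithLp.equiv 2 (m → ℂ)).symm (Pi.single i (1:ℂ))))
              (U' ((WithLp.equiv 2 (m → ℂ)).symm (Pi.single j (1:ℂ)))) := by rw [h2, h2]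
        _ = inner (𝕜 := ℂ) ((WithLp.equiv 2 (m → ℂ)).symm (Pi.single i (1:ℂ)))
              ((WithLp.equiv 2 (m → ℂ)).symm (Pi.single j (1:ℂ))) := U'.inner_map_map _ _
        _ = dotProduct (star (Pi.single i (1:ℂ))) (Pi.single j (1:ℂ)) :=
            by rw [dotProduct_comm]; rfl
    simp only [dotProduct, Matrix.mulVec_single, mul_one, Pi.star_apply,
      MulOpposite.op_one, one_smul, Matrix.col_apply] at key
    rw [Matrix.mul_apply]
    simp only [Matrix.conjTranspose_apply]
    rw [key]
    simp [Pi.single_apply, Matrix.one_apply, Finset.sum_ite_eq', eq_comm]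
  refine ⟨U, ?_, hUunit, hUAB⟩
  rw [mul_eq_one_comm]
  exact hUunit

/-- any bipartite pure state is bipartite non-chiral: there are local
unitaries `U_A, U_B` with `(U_A ⊗ U_B) ψ = ψ*`. -/
theorem stmt_1 {dA dB : ℕ} (ψ : Fin dA × Fin dB → ℂ)
    (hψ : ∑ x, ‖ψ x‖ ^ 2 = 1) :
    ∃ (UA : Matrix (Fin dA) (Fin dA) ℂ) (UB : Matrix (Fin dB) (Fin dB) ℂ),
      IsUnitary UA ∧ IsUnitary UB ∧
      (UA ⊗ₖ UB).mulVec ψ = fun x => starRingEnd ℂ (ψ x) := by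
  classical
  set c : ℂ →+* ℂ := starRingEnd ℂ with hc
  set M : Matrix (Fin dA) (Fin dB) ℂ := Matrix.of (fun a b => ψ (a, b)) with hMdef
  set Mc : Matrix (Fin dA) (Fin dB) ℂ := M.map c with hMcdef
  have hH : (Mᴴ * M).IsHermitian := Matrix.isHermitian_conjTranspose_mul_self M
  set W : Matrix (Fin dB) (Fin dB) ℂ := (hH.eigenvectorUnitary : Matrix (Fin dB) (Fin dB) ℂ)
    with hWdef
  have hWmem : W ∈ Matrix.unitaryGroup (Fin dB) ℂ := hH.eigenvectorUnitary.2
  have hW1 : Wᴴ * W = 1 := by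
    have := (Matrix.mem_unitaryGroup_iff').mp hWmem
    rwa [Matrix.star_eq_conjTranspose] at this
  have hW2 : W * Wᴴ = 1 := by
    have := (Matrix.mem_unitaryGroup_iff).mp hWmem
    rwa [Matrix.star_eq_conjTranspose] at this
  set D : Matrix (Fin dB) (Fin dB) ℂ :=
    Matrix.diagonal (RCLike.ofReal ∘ hH.eigenvalues) with hDdef
  have hspec : Mᴴ * M = W * D * Wᴴ := by
    have := hH.spectral_theorem
    rwa [Unitary.conjStarAlgAut_apply, Matrix.star_eq_conjTranspose] at this
  -- conjugation facts
  have hconjCT : ∀ {p q : Type} [Fintype p] [Fintype q] (X : Matrix p q ℂ), Xᴴ.map c = Xᵀ := by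
    intro p q _ _ X
    ext i j
    simp [Matrix.conjTranspose_apply, hc]
  have hDconj : D.map c = D := by
    ext i j
    rcases eq_or_ne i j with rfl | hij
    · simp [hDdef, Matrix.diagonal_apply_eq, hc, Complex.conj_ofReal]
    · simp [hDdef, Matrix.diagonal_apply_ne _ hij, hij]
  have hWt1 : Wᵀ * W.map c = 1 := by
    have := congrArg (fun X => X.map c) hW1
    simpa [Matrix.map_mul, hconjCT W] using this
  have hWt2 : W.map c * Wᵀ = 1 := by
    have := congrArg (fun X => X.map c) hW2
    simpa [Matrix.map_mul, hconjCT W] using this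
  set V : Matrix (Fin dB) (Fin dB) ℂ := W * Wᵀ with hVdef
  have hVsymm : Vᵀ = V := by
    rw [hVdef, Matrix.transpose_mul, Matrix.transpose_transpose]
  have hVH : Vᴴ = W.map c * Wᴴ := by
    rw [hVdef, Matrix.conjTranspose_mul, ← hconjCT W]
    congr 1
    ext i j
    simp [Matrix.conjTranspose_apply, hc]
  have hVunit : IsUnitary V := by
    constructor
    · rw [hVH, hVdef]
      calc W * Wᵀ * (W.map c * Wᴴ) = W * (Wᵀ * W.map c) * Wᴴ := by
            rw [Matrix.mul_assoc, Matrix.mul_assoc, Matrix.mul_assoc]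
        _ = 1 := by rw [hWt1, Matrix.mul_one, hW2]
    · rw [hVH, hVdef]
      calc W.map c * Wᴴ * (W * Wᵀ) = W.map c * (Wᴴ * W) * Wᵀ := by
            rw [Matrix.mul_assoc, Matrix.mul_assoc, Matrix.mul_assoc]
        _ = 1 := by rw [hW1, Matrix.mul_one, hWt2]
  -- key Gram identity
  have hMcH : Mcᴴ * Mc = (Mᴴ * M).map c := by
    have hct : (M.map c)ᴴ = Mᴴ.map c := by
      ext i j
      simp [Matrix.conjTranspose_apply, hc]
    rw [hMcdef, Matrix.map_mul, hct]
  have hkey : (M * V)ᴴ * (M * V) = Mcᴴ * Mc := by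
    rw [Matrix.conjTranspose_mul, hMcH, hspec, Matrix.map_mul, Matrix.map_mul, hDconj,
      hconjCT W, hVH, hVdef]
    calc W.map c * Wᴴ * Mᴴ * (M * (W * Wᵀ))
        = W.map c * (Wᴴ * (Mᴴ * M) * W) * Wᵀ := by
          simp only [Matrix.mul_assoc]
      _ = W.map c * (Wᴴ * (W * D * Wᴴ) * W) * Wᵀ := by rw [hspec]
      _ = W.map c * ((Wᴴ * W) * D * (Wᴴ * W)) * Wᵀ := by simp only [Matrix.mul_assoc]
      _ = W.map c * D * Wᵀ := by rw [hW1]; simp [Matrix.mul_assoc]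
  obtain ⟨U, hU1, hU2, hUeq⟩ := exists_unitary_mul_eq (M * V) Mc hkey
  refine ⟨U, V, ⟨hU1, hU2⟩, hVunit, ?_⟩
  have hsym : ∀ x y, V x y = V y x := by
    intro x y
    have := congrFun (congrFun hVsymm x) y
    rw [Matrix.transpose_apply] at this
    exact this.symm
  funext x
  obtain ⟨a, b⟩ := x
  have hent : (U * (M * V)) a b = starRingEnd ℂ (ψ (a, b)) := by
    rw [hUeq]
    simp [hMcdef, hMdef, hc, Matrix.map_apply]
  rw [← hent]
  calc ((U ⊗ₖ V) *ᵥ ψ) (a, b)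
      = ∑ a', ∑ b', U a a' * V b b' * ψ (a', b') := by
        simp [Matrix.mulVec, dotProduct, Fintype.sum_prod_type,
          Matrix.kroneckerMap_apply]
    _ = ∑ a', U a a' * ∑ b', M a' b' * V b' b := by
        apply Finset.sum_congr rfl
        intro a' _
        rw [Finset.mul_sum]
        apply Finset.sum_congr rfl
        intro b' _
        rw [hsym b b']
        simp [hMdef]
        ring
    _ = (U * (M * V)) a b := by
        simp [Matrix.mul_apply]
end
end

section
/- If a pure state ψ on A₁ ⊗ ⋯ ⊗ Aₙ is n-partite non-chiral (there exist unitaries U_{A₁},…,U_{Aₙ} with (⊗ᵢ U_{Aᵢ})ψ proportional to ψ*), then its reduced density matrix on A₁⋯A_{n−1} is (n−1)-partite non-chiral. -/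
open Matrix Kronecker BigOperators
open scoped ComplexOrder

noncomputable section

/-- The tensor product of a family of local operators, acting on the product of the
subsystems `A₁, …, A_k`. -/
def piTensor {k : ℕ} {d : Fin k → ℕ} (U : (i : Fin k) → Matrix (Fin (d i)) (Fin (d i)) ℂ) :
    Matrix ((i : Fin k) → Fin (d i)) ((i : Fin k) → Fin (d i)) ℂ :=
  fun x y => ∏ i, U i (x i) (y i)

/-!
Let `Ψ a b = ψ (a, b)` be the coefficient matrix of `ψ`: the reduced state is `Ψ Ψᴴ`, and
`(A ⊗ V) ψ` has coefficient matrix `A Ψ Vᵀ`. Non-chirality reads `M Ψ Vᵀ = c Ψ̄` with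
`M = ⊗ᵢ Uᵢ`; as `Vᵀ` is unitary, `M (Ψ Ψᴴ) Mᴴ = (M Ψ Vᵀ) (M Ψ Vᵀ)ᴴ = |c|² conj (Ψ Ψᴴ)`, and
comparing traces gives `|c| = 1`. So the `Uᵢ` themselves witness non-chirality of the
reduced state.
-/

open Function

section PiTensor

variable {k : ℕ} {d : Fin k → ℕ}

lemma piTensor_mul (U V : (i : Fin k) → Matrix (Fin (d i)) (Fin (d i)) ℂ) :
    piTensor U * piTensor V = piTensor fun i => U i * V i := by
  ext x y
  simp only [piTensor, mul_apply, Finset.prod_univ_sum, ← Finset.prod_mul_distrib]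
  rfl

lemma piTensor_one : piTensor (fun i => (1 : Matrix (Fin (d i)) (Fin (d i)) ℂ)) = 1 := by
  ext x y
  simp [piTensor, one_apply, Fintype.prod_boole, funext_iff]

lemma piTensor_conjTranspose (U : (i : Fin k) → Matrix (Fin (d i)) (Fin (d i)) ℂ) :
    (piTensor U)ᴴ = piTensor fun i => (U i)ᴴ := by
  ext x y
  simp [piTensor, conjTranspose_apply]

lemma piTensor_conjTranspose_mul_self {U : (i : Fin k) → Matrix (Fin (d i)) (Fin (d i)) ℂ}
    (hU : ∀ i, (U i)ᴴ * U i = 1) : (piTensor U)ᴴ * piTensor U = 1 := by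
  simp only [piTensor_conjTranspose, piTensor_mul, hU, piTensor_one]

end PiTensor

lemma trace_conjM {α : Type*} [Fintype α] (ρ : Matrix α α ℂ) :
    trace (conjM ρ) = star (trace ρ) := by
  simp [conjM, trace]

lemma trace_traceB {α β : Type*} [Fintype α] [Fintype β] (ρ : Matrix (α × β) (α × β) ℂ) :
    trace (traceB ρ) = trace ρ := by
  simp [trace, traceB, Fintype.sum_prod_type]

lemma traceB_vecMulVec_star {α β : Type*} [Fintype β] (ψ : α × β → ℂ) :
    traceB (vecMulVec ψ (star ψ)) = of (curry ψ) * (of (curry ψ))ᴴ := by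
  ext a a'
  simp [traceB, vecMulVec_apply, mul_apply]

lemma of_curry_kronecker_mulVec {R l m n p : Type*} [CommSemiring R] [Fintype m] [Fintype p]
    (A : Matrix l m R) (B : Matrix n p R) (ψ : m × p → R) :
    of (curry ((A ⊗ₖ B) *ᵥ ψ)) = A * of (curry ψ) * Bᵀ := by
  ext a b
  simp only [of_apply, curry, mulVec, dotProduct, Fintype.sum_prod_type, kroneckerMap_apply,
    mul_apply, transpose_apply, Finset.sum_mul]
  rw [Finset.sum_comm]
  exact Finset.sum_congr rfl fun _ _ => Finset.sum_congr rfl fun _ _ => by ring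

lemma mul_traceB_vecMulVec_mul_conjTranspose_eq_smul_conjM {α β : Type*} [Fintype α]
    [Fintype β] [DecidableEq β] (A : Matrix α α ℂ) {B : Matrix β β ℂ} (hB : Bᴴ * B = 1)
    (c : ℂ) (ψ : α × β → ℂ) (h : (A ⊗ₖ B) *ᵥ ψ = c • fun x => starRingEnd ℂ (ψ x)) :
    A * traceB (vecMulVec ψ (star ψ)) * Aᴴ
      = (star c * c) • conjM (traceB (vecMulVec ψ (star ψ))) := by
  set Ψ := of (curry ψ)
  have hΨ : A * Ψ * Bᵀ = c • Ψ.map (starRingEnd ℂ) := by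
    rw [← of_curry_kronecker_mulVec, h]
    rfl
  have hBt : Bᵀ * Bᵀᴴ = 1 := by
    rw [conjTranspose_transpose_eq_transpose_conjTranspose, ← transpose_mul, hB, transpose_one]
  rw [traceB_vecMulVec_star]
  calc A * (Ψ * Ψᴴ) * Aᴴ = A * Ψ * (Bᵀ * Bᵀᴴ) * Ψᴴ * Aᴴ := by
        rw [hBt, Matrix.mul_one, Matrix.mul_assoc A, Matrix.mul_assoc A, Matrix.mul_assoc A]
    _ = (A * Ψ * Bᵀ) * (A * Ψ * Bᵀ)ᴴ := by
        simp only [conjTranspose_mul, Matrix.mul_assoc]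
    _ = (star c * c) • conjM (Ψ * Ψᴴ) := by
        rw [hΨ, conjTranspose_smul, smul_mul, Matrix.mul_smul, smul_smul, mul_comm, conjM,
          Matrix.map_mul, conjTranspose_map (starRingEnd ℂ) fun _ => rfl]

/-- if a pure state `ψ` on `A₁ ⊗ ⋯ ⊗ A_{k} ⊗ A_{k+1}` (the last factor being
`Fin m`) is `(k+1)`-partite non-chiral (up to proportionality), then its reduced density
matrix on `A₁⋯A_k` is `k`-partite non-chiral. -/
theorem stmt_2 {k m : ℕ} {d : Fin k → ℕ}
    (ψ : (((i : Fin k) → Fin (d i)) × Fin m) → ℂ)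
    (hψ : ∑ x, ‖ψ x‖ ^ 2 = 1)
    (hnc : ∃ (U : (i : Fin k) → Matrix (Fin (d i)) (Fin (d i)) ℂ)
        (V : Matrix (Fin m) (Fin m) ℂ) (c : ℂ),
      (∀ i, IsUnitary (U i)) ∧ IsUnitary V ∧
      (piTensor U ⊗ₖ V).mulVec ψ = c • fun x => starRingEnd ℂ (ψ x)) :
    ∃ W : (i : Fin k) → Matrix (Fin (d i)) (Fin (d i)) ℂ,
      (∀ i, IsUnitary (W i)) ∧
      piTensor W * traceB (Matrix.vecMulVec ψ (star ψ)) * (piTensor W)ᴴ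
        = conjM (traceB (Matrix.vecMulVec ψ (star ψ))) := by
  obtain ⟨U, V, c, hU, hV, hmul⟩ := hnc
  set ρ := traceB (vecMulVec ψ (star ψ))
  have hconj : piTensor U * ρ * (piTensor U)ᴴ = (star c * c) • conjM ρ :=
    mul_traceB_vecMulVec_mul_conjTranspose_eq_smul_conjM _ hV.2 c ψ hmul
  have htrace : trace ρ = 1 := by
    rw [trace_traceB, trace_vecMulVec, dotProduct_comm]
    simp only [dotProduct, Pi.star_apply, ← starRingEnd_apply, Complex.conj_mul']
    exact_mod_cast hψ
  have hc : star c * c = 1 := by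
    have := congrArg trace hconj
    rwa [trace_mul_cycle, piTensor_conjTranspose_mul_self fun i => (hU i).2, Matrix.one_mul,
      trace_smul, trace_conjM, htrace, star_one, smul_eq_mul, mul_one, eq_comm] at this
  exact ⟨U, hU, by rw [hconj, hc, one_smul]⟩
end
end

section
/- The qutrit-qubit state ρ_{AB} = Σ_{i=1}^3 p_i |i⟩⟨i|_A ⊗ |ψ_i⟩⟨ψ_i|_B, with distinct positive p_i summing to 1 and |ψ₁⟩ = |0⟩, |ψ₂⟩ = (|0⟩+|1⟩)/√2, |ψ₃⟩ = (|0⟩+√3 i|1⟩)/2, is bipartite chiral: there exist no unitaries U_A, U_B with (U_A ⊗ U_B) ρ_{AB} (U_A† ⊗ U_B†) = ρ*_{AB}. -/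
open Matrix Kronecker BigOperators
open scoped ComplexOrder

noncomputable section

/-- The three qubit states `|ψ₁⟩ = |0⟩`, `|ψ₂⟩ = (|0⟩+|1⟩)/√2`,
`|ψ₃⟩ = (|0⟩ + √3 i |1⟩)/2`. -/
def ψv : Fin 3 → Fin 2 → ℂ :=
  ![![1, 0],
    ![(Real.sqrt 2 : ℂ)⁻¹, (Real.sqrt 2 : ℂ)⁻¹],
    ![1 / 2, (Real.sqrt 3 : ℂ) / 2 * Complex.I]]

/-- The qutrit-qubit state `ρ_{AB} = Σᵢ pᵢ |i⟩⟨i|_A ⊗ |ψᵢ⟩⟨ψᵢ|_B`. -/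
def ρex (p : Fin 3 → ℝ) : Matrix (Fin 3 × Fin 2) (Fin 3 × Fin 2) ℂ :=
  ∑ i, (p i : ℂ) •
    (Matrix.single i i (1 : ℂ) ⊗ₖ Matrix.vecMulVec (ψv i) (star (ψv i)))

abbrev Pm (i : Fin 3) : Matrix (Fin 2) (Fin 2) ℂ := Matrix.vecMulVec (ψv i) (star (ψv i))

lemma hP0 : Pm 0 = !![1,0;0,0] := by
  ext a b; fin_cases a <;> fin_cases b <;> simp [Pm, vecMulVec_apply, ψv]

lemma hP1 : Pm 1 = !![(1/2:ℂ),1/2;1/2,1/2] := by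
  ext a b; fin_cases a <;> fin_cases b <;>
    simp [Pm, vecMulVec_apply, ψv, Complex.star_def, ← Complex.ofReal_inv, Complex.conj_ofReal,
      ← Complex.ofReal_mul] <;>
    rw [← mul_inv] <;> norm_num [Real.mul_self_sqrt]

lemma hP2 : Pm 2 = !![(1/4:ℂ), -(Real.sqrt 3:ℂ)/4*Complex.I; (Real.sqrt 3:ℂ)/4*Complex.I, 3/4] := by
  ext a b; fin_cases a <;> fin_cases b <;>
    simp [Pm, vecMulVec_apply, ψv, Complex.star_def, star_mul', map_div₀, Complex.star_def, Complex.conj_ofReal] <;>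
    ring_nf <;>
    simp [Complex.I_sq, Complex.ext_iff, ← Complex.ofReal_pow] <;> norm_num [Real.sq_sqrt]

abbrev Ej (j : Fin 3) : Matrix (Fin 3) (Fin 3) ℂ := Matrix.single j j (1 : ℂ)

lemma kron_conjT {l m n p : Type*} [Fintype l] [Fintype m] [Fintype n] [Fintype p]
    (A : Matrix l m ℂ) (B : Matrix n p ℂ) : (A ⊗ₖ B)ᴴ = Aᴴ ⊗ₖ Bᴴ := by
  ext ⟨i,j⟩ ⟨k,l⟩
  simp [conjTranspose_apply, kroneckerMap_apply, star_mul']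

lemma expandLHS (p : Fin 3 → ℝ) (UA : Matrix (Fin 3) (Fin 3) ℂ) (UB : Matrix (Fin 2) (Fin 2) ℂ) :
    (UA ⊗ₖ UB) * ρex p * (UA ⊗ₖ UB)ᴴ
      = ∑ j, (p j : ℂ) • ((UA * Ej j * UAᴴ) ⊗ₖ (UB * Pm j * UBᴴ)) := by
  rw [ρex, Finset.mul_sum, Finset.sum_mul]
  refine Finset.sum_congr rfl fun j _ => ?_
  rw [Matrix.mul_smul, Matrix.smul_mul, kron_conjT, mul_kronecker_mul, mul_kronecker_mul]

lemma expandRHS (p : Fin 3 → ℝ) :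
    conjM (ρex p) = ∑ j, (p j : ℂ) • (Ej j ⊗ₖ conjM (Pm j)) := by
  ext ⟨a,b⟩ ⟨a',b'⟩
  simp [conjM, ρex, Matrix.sum_apply, kroneckerMap_apply, Matrix.single,
    Complex.conj_ofReal, apply_ite (starRingEnd ℂ), Matrix.of_apply]

lemma traceB_def {α β : Type*} [Fintype β] (ρ : Matrix (α × β) (α × β) ℂ) (a a' : α) :
    (fun a a' => ∑ b, ρ (a, b) (a', b) : Matrix α α ℂ) a a' = ∑ b, ρ (a, b) (a', b) := rfl

lemma traceB_sum_kron (c : Fin 3 → ℂ) (X : Fin 3 → Matrix (Fin 3) (Fin 3) ℂ)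
    (Y : Fin 3 → Matrix (Fin 2) (Fin 2) ℂ) (a a' : Fin 3) :
    ∑ b, (∑ j, c j • (X j ⊗ₖ Y j)) (a, b) (a', b)
      = (∑ j, (c j * (Y j).trace) • X j) a a' := by
  simp only [Matrix.sum_apply, Matrix.smul_apply, kroneckerMap_apply, smul_eq_mul,
    Matrix.trace, Matrix.diag]
  rw [Finset.sum_comm]
  refine Finset.sum_congr rfl fun j _ => ?_
  rw [Finset.mul_sum, Finset.sum_mul]
  refine Finset.sum_congr rfl fun b _ => ?_
  ring

lemma trace_Pm (j : Fin 3) : (Pm j).trace = 1 := by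
  fin_cases j <;> simp only [Fin.isValue, Fin.mk_one, Fin.reduceFinMk, show (⟨0,by norm_num⟩ : Fin 3) = 0 from rfl, show (⟨1,by norm_num⟩ : Fin 3) = 1 from rfl, show (⟨2,by norm_num⟩ : Fin 3) = 2 from rfl]
  · rw [hP0]; simp [Matrix.trace_fin_two]
  · rw [hP1]; simp [Matrix.trace_fin_two]; norm_num
  · rw [hP2]; simp [Matrix.trace_fin_two]; norm_num

lemma trace_conjM_s4 {n : Type*} [Fintype n] (A : Matrix n n ℂ) :
    (conjM A).trace = starRingEnd ℂ A.trace := by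
  simp [conjM, Matrix.trace, Matrix.diag, map_sum]

lemma conjM_mul {n : Type*} [Fintype n] (A B : Matrix n n ℂ) :
    conjM (A * B) = conjM A * conjM B := Matrix.map_mul

lemma sum_Ej (p : Fin 3 → ℝ) :
    ∑ j, (p j : ℂ) • Ej j = Matrix.diagonal (fun i => (p i : ℂ)) := by
  ext i i'
  fin_cases i <;> fin_cases i' <;>
    simp [Fin.sum_univ_three, Matrix.single, Matrix.diagonal]


/-- for pairwise distinct positive probabilities `p` summing to `1`,
the state `ρex p` is bipartite chiral: no local unitaries conjugate it to its
entrywise complex conjugate. -/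
theorem stmt_4 (p : Fin 3 → ℝ) (hpos : ∀ i, 0 < p i) (hsum : ∑ i, p i = 1)
    (hdist : Function.Injective p) :
    ¬ ∃ (UA : Matrix (Fin 3) (Fin 3) ℂ) (UB : Matrix (Fin 2) (Fin 2) ℂ),
      IsUnitary UA ∧ IsUnitary UB ∧
      (UA ⊗ₖ UB) * ρex p * (UA ⊗ₖ UB)ᴴ = conjM (ρex p) := by
  rintro ⟨UA, UB, hUA, hUB, H⟩
  rw [expandLHS, expandRHS] at H
  set D := Matrix.diagonal (fun i => (p i : ℂ)) with hD
  -- traces of conjugated projectors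
  have htr : ∀ j, (UB * Pm j * UBᴴ).trace = 1 := by
    intro j
    rw [Matrix.trace_mul_cycle, hUB.2, Matrix.one_mul, trace_Pm]
  have htr' : ∀ j, (conjM (Pm j)).trace = 1 := by
    intro j; rw [trace_conjM_s4, trace_Pm]; simp
  -- Step A: partial trace over B
  have hA3 : ∑ j, (p j : ℂ) • (UA * Ej j * UAᴴ) = ∑ j, (p j : ℂ) • Ej j := by
    ext a a'
    have h := congrArg (fun M : Matrix (Fin 3 × Fin 2) (Fin 3 × Fin 2) ℂ =>
      ∑ b, M (a, b) (a', b)) H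
    simp only [traceB_sum_kron] at h
    simpa [htr, htr'] using h
  have hA2 : UA * D * UAᴴ = D := by
    have h1 : ∑ j, (p j : ℂ) • (UA * Ej j * UAᴴ) = UA * (∑ j, (p j : ℂ) • Ej j) * UAᴴ := by
      rw [Finset.mul_sum, Finset.sum_mul]
      exact Finset.sum_congr rfl fun j _ => by rw [Matrix.mul_smul, Matrix.smul_mul]
    rw [h1, sum_Ej] at hA3
    exact hA3
  -- Step B: UA commutes with D, hence diagonal
  have hcomm : UA * D = D * UA := by
    have h2 : UA * D * UAᴴ * UA = D * UA := by rw [hA2]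
    rwa [Matrix.mul_assoc (UA * D), hUA.2, Matrix.mul_one] at h2
  have hoff : ∀ i j, i ≠ j → UA i j = 0 := by
    intro i j hij
    have h : (UA * D) i j = (D * UA) i j := by rw [hcomm]
    rw [hD, Matrix.mul_diagonal, Matrix.diagonal_mul] at h
    have hp : (p j : ℂ) - (p i : ℂ) ≠ 0 := by
      rw [sub_ne_zero]
      exact_mod_cast fun e => hij (hdist e).symm
    have h2 : UA i j * ((p j : ℂ) - (p i : ℂ)) = 0 := by ring_nf; linear_combination h
    exact (mul_eq_zero.mp h2).resolve_right hp
  have hu : ∀ i, UA i i * star (UA i i) = 1 := by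
    intro i
    have h : (UA * UAᴴ) i i = (1 : Matrix (Fin 3) (Fin 3) ℂ) i i := by rw [hUA.1]
    rw [Matrix.one_apply_eq, Matrix.mul_apply] at h
    simp only [conjTranspose_apply] at h
    rwa [Finset.sum_eq_single i
      (fun k _ hk => by rw [hoff i k (Ne.symm hk)]; simp)
      (by simp)] at h
  -- UA acts trivially on each Ej
  have hEj : ∀ j, UA * Ej j * UAᴴ = Ej j := by
    intro j
    have h1 : UA * Ej j = Matrix.single j j (UA j j) := by
      ext a b
      by_cases hb : b = j
      · subst hb
        rw [Matrix.mul_single_apply_same, mul_one]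
        by_cases ha : a = b
        · subst ha; rw [Matrix.single_apply_same]
        · rw [hoff a b ha, Matrix.single_apply_of_ne _ _ _ _ _ (by tauto)]
      · rw [Matrix.mul_single_apply_of_ne _ _ _ a b hb,
          Matrix.single_apply_of_ne _ _ _ _ _ (by tauto)]
    have h2 : Matrix.single j j (UA j j) * UAᴴ = Matrix.single j j (1 : ℂ) := by
      ext a b
      by_cases ha : a = j
      · subst ha
        rw [Matrix.single_mul_apply_same, Matrix.conjTranspose_apply]
        by_cases hb : b = a
        · subst hb; rw [Matrix.single_apply_same, hu]
        · rw [hoff b a hb, star_zero, mul_zero,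
            Matrix.single_apply_of_ne _ _ _ _ _ (by tauto)]
      · rw [Matrix.single_mul_apply_of_ne _ _ _ a b ha,
          Matrix.single_apply_of_ne _ _ _ _ _ (by tauto)]
    rw [h1, h2]
  simp only [hEj] at H
  -- Step C: per-block equality for UB
  have hB : ∀ i, UB * Pm i * UBᴴ = conjM (Pm i) := by
    intro i
    ext b b'
    have h : (∑ j, (p j : ℂ) • (Ej j ⊗ₖ (UB * Pm j * UBᴴ))) (i, b) (i, b')
        = (∑ j, (p j : ℂ) • (Ej j ⊗ₖ conjM (Pm j))) (i, b) (i, b') := by rw [H]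
    simp only [Matrix.sum_apply, Matrix.smul_apply, kroneckerMap_apply, smul_eq_mul] at h
    have collapse : ∀ (Y : Fin 3 → Matrix (Fin 2) (Fin 2) ℂ),
        ∑ j, (p j : ℂ) * (Ej j i i * Y j b b') = (p i : ℂ) * Y i b b' := by
      intro Y
      rw [Finset.sum_eq_single i
        (fun k _ hk => by
          have hz : Ej k i i = 0 := by
            have hne : ¬(k = i ∧ k = i) := by tauto
            exact Matrix.single_apply_of_ne _ _ _ _ _ hne
          rw [hz]; ring)
        (by simp)]
      have ho : Ej i i i = 1 := Matrix.single_apply_same i i 1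
      rw [ho, one_mul]
    rw [collapse, collapse] at h
    exact mul_left_cancel₀ (Complex.ofReal_ne_zero.mpr (hpos i).ne') h
  -- Step D: the Bargmann invariant is real, contradiction
  have e2 : ∀ Y : Matrix (Fin 2) (Fin 2) ℂ, UBᴴ * (UB * Y) = Y := fun Y => by
    rw [← Matrix.mul_assoc, hUB.2, Matrix.one_mul]
  have h3 : (UB * Pm 0 * UBᴴ) * (UB * Pm 1 * UBᴴ) * (UB * Pm 2 * UBᴴ)
      = UB * (Pm 0 * Pm 1 * Pm 2) * UBᴴ := by
    simp only [Matrix.mul_assoc, e2]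
  have h4 : (Pm 0 * Pm 1 * Pm 2).trace
      = starRingEnd ℂ ((Pm 0 * Pm 1 * Pm 2).trace) := by
    calc (Pm 0 * Pm 1 * Pm 2).trace
        = (UB * (Pm 0 * Pm 1 * Pm 2) * UBᴴ).trace := by
          rw [Matrix.trace_mul_cycle UB (Pm 0 * Pm 1 * Pm 2) UBᴴ, ← Matrix.mul_assoc, hUB.2,
            Matrix.one_mul]
      _ = ((UB * Pm 0 * UBᴴ) * (UB * Pm 1 * UBᴴ) * (UB * Pm 2 * UBᴴ)).trace := by rw [h3]
      _ = (conjM (Pm 0) * conjM (Pm 1) * conjM (Pm 2)).trace := by rw [hB 0, hB 1, hB 2]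
      _ = (conjM (Pm 0 * Pm 1 * Pm 2)).trace := by rw [conjM_mul, conjM_mul]
      _ = starRingEnd ℂ ((Pm 0 * Pm 1 * Pm 2).trace) := trace_conjM_s4 _
  have him : ((Pm 0 * Pm 1 * Pm 2).trace).im = 0 := by
    have := congrArg Complex.im h4
    simp only [Complex.conj_im] at this
    linarith
  have hval : (Pm 0 * Pm 1 * Pm 2).trace
      = (1/8 : ℂ) + ((Real.sqrt 3 / 8 : ℝ) : ℂ) * Complex.I := by
    rw [hP0, hP1, hP2]
    simp [Matrix.trace_fin_two, Matrix.mul_apply, Fin.sum_univ_two]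
    push_cast
    ring
  rw [hval] at him
  simp [Complex.add_im, Complex.mul_im] at him
end
end

section
/- Any additive chirality measure is odd under complex conjugation: if a local-unitary-invariant functional 𝒜 on bipartite density matrices vanishes on non-chiral states and satisfies 𝒜(ρ_{AB} ⊗ σ_{A'B'}) = 𝒜(ρ_{AB}) + 𝒜(σ_{A'B'}) under the bipartition AA'|BB', then 𝒜(ρ*) = −𝒜(ρ) for all ρ. -/
open Matrix Kronecker BigOperators
open scoped ComplexOrder

noncomputable section

lemma conjTranspose_kron {m n : Type*} [Fintype m] [Fintype n]
    (A : Matrix m m ℂ) (B : Matrix n n ℂ) : (A ⊗ₖ B)ᴴ = Aᴴ ⊗ₖ Bᴴ := by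
  ext ⟨i, j⟩ ⟨k, l⟩
  simp [conjTranspose_apply, kroneckerMap_apply, mul_comm]

lemma kron_posSemidef {m n : Type*} [Fintype m] [Fintype n] [DecidableEq m] [DecidableEq n]
    {A : Matrix m m ℂ} {B : Matrix n n ℂ} (hA : A.PosSemidef) (hB : B.PosSemidef) :
    (A ⊗ₖ B).PosSemidef := by
  exact hA.kronecker hB

lemma conjM_density {m : Type*} [Fintype m] [DecidableEq m] {ρ : Matrix m m ℂ}
    (hρ : IsDensity ρ) : IsDensity (conjM ρ) := by
  constructor
  · have : conjM ρ = ρᵀ := by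
      have h := hρ.1.isHermitian
      ext i j
      simp only [conjM, Matrix.map_apply, Matrix.transpose_apply]
      rw [← congrFun (congrFun h i) j]
      simp [conjTranspose_apply]
    rw [this]; exact hρ.1.transpose
  · have h2 := hρ.2
    simp only [Matrix.trace, Matrix.diag] at h2
    simp [conjM, Matrix.trace, Matrix.diag, ← map_sum, h2]

lemma kron_density {m n : Type*} [Fintype m] [Fintype n] [DecidableEq m] [DecidableEq n]
    {A : Matrix m m ℂ} {B : Matrix n n ℂ} (hA : IsDensity A) (hB : IsDensity B) :
    IsDensity (A ⊗ₖ B) :=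
  ⟨kron_posSemidef hA.1 hB.1, by rw [Matrix.trace_kronecker, hA.2, hB.2, one_mul]⟩

lemma reindex_density {m n : Type*} [Fintype m] [Fintype n] [DecidableEq m] [DecidableEq n]
    (e : m ≃ n) {A : Matrix m m ℂ} (hA : IsDensity A) :
    IsDensity (Matrix.reindex e e A) := by
  refine ⟨hA.1.submatrix _, ?_⟩
  rw [← hA.2]
  simp only [Matrix.reindex_apply, Matrix.trace, Matrix.diag, Matrix.submatrix_apply]
  exact Fintype.sum_equiv e.symm _ _ fun i => rfl

def swapU (γ : Type*) [Fintype γ] [DecidableEq γ] : Matrix (γ × γ) (γ × γ) ℂ :=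
  Matrix.of fun p q => if p.swap = q then 1 else 0

lemma swapU_unitary (γ : Type*) [Fintype γ] [DecidableEq γ] : IsUnitary (swapU γ) := by
  constructor <;>
  · ext p q
    simp only [swapU, Matrix.mul_apply, Matrix.conjTranspose_apply, Matrix.one_apply,
      Matrix.of_apply, apply_ite (starRingEnd ℂ), _root_.map_one, _root_.map_zero, Prod.ext_iff,
      ite_and, mul_ite, ite_mul, one_mul, mul_one, zero_mul, mul_zero,
      Fintype.sum_prod_type, Finset.sum_ite_eq, Finset.sum_ite_eq', Finset.mem_univ,
      if_true, Prod.fst_swap, Prod.snd_swap, eq_comm]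
    by_cases h1 : p.1 = q.1 <;> by_cases h2 : p.2 = q.2 <;> simp [h1, h2]

lemma swap_conj_apply {α β : Type*} [Fintype α] [Fintype β] [DecidableEq α] [DecidableEq β]
    (M : Matrix ((α × α) × (β × β)) ((α × α) × (β × β)) ℂ)
    (p q : (α × α) × (β × β)) :
    ((swapU α ⊗ₖ swapU β) * M * (swapU α ⊗ₖ swapU β)ᴴ) p q
      = M (p.1.swap, p.2.swap) (q.1.swap, q.2.swap) := by
  simp only [Matrix.mul_apply, Matrix.conjTranspose_apply, kroneckerMap_apply, swapU,
    Matrix.of_apply, ite_mul, mul_ite, one_mul, zero_mul, mul_one, mul_zero,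
    apply_ite (starRingEnd ℂ), _root_.map_one, _root_.map_zero,
    Fintype.sum_prod_type, Finset.sum_ite_eq, Finset.mem_univ, if_true]
  simp [apply_ite (star : ℂ → ℂ), Prod.mk.injEq, ite_and, mul_ite, mul_one, mul_zero,
    Finset.sum_ite_eq, Finset.sum_ite_eq', Prod.ext_iff]
  rfl

lemma key_eq {α β : Type*} [Fintype α] [Fintype β] [DecidableEq α] [DecidableEq β]
    (ρ : Matrix (α × β) (α × β) ℂ) :
    (swapU α ⊗ₖ swapU β) *
        (Matrix.reindex (Equiv.prodProdProdComm α β α β) (Equiv.prodProdProdComm α β α β)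
          (ρ ⊗ₖ conjM ρ)) * (swapU α ⊗ₖ swapU β)ᴴ
      = conjM (Matrix.reindex (Equiv.prodProdProdComm α β α β) (Equiv.prodProdProdComm α β α β)
          (ρ ⊗ₖ conjM ρ)) := by
  ext p q
  rw [swap_conj_apply]
  obtain ⟨⟨a, a'⟩, b, b'⟩ := p
  obtain ⟨⟨c, c'⟩, d, d'⟩ := q
  simp [conjM, Matrix.reindex_apply, Matrix.submatrix_apply, Equiv.prodProdProdComm,
    kroneckerMap_apply, Matrix.map_apply, mul_comm]

/-- any additive (local-unitary-invariant, vanishing on non-chiral states)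
bipartite chirality measure is odd under complex conjugation. -/
theorem stmt_5
    (𝒜 : ∀ (α β : Type) [Fintype α] [Fintype β] [DecidableEq α] [DecidableEq β],
      Matrix (α × β) (α × β) ℂ → ℝ)
    (hinv : ∀ (α β : Type) [Fintype α] [Fintype β] [DecidableEq α] [DecidableEq β]
      (ρ : Matrix (α × β) (α × β) ℂ) (UA : Matrix α α ℂ) (UB : Matrix β β ℂ),
      IsDensity ρ → IsUnitary UA → IsUnitary UB →
      𝒜 α β ((UA ⊗ₖ UB) * ρ * (UA ⊗ₖ UB)ᴴ) = 𝒜 α β ρ)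
    (hvan : ∀ (α β : Type) [Fintype α] [Fintype β] [DecidableEq α] [DecidableEq β]
      (ρ : Matrix (α × β) (α × β) ℂ), IsDensity ρ →
      (∃ (UA : Matrix α α ℂ) (UB : Matrix β β ℂ), IsUnitary UA ∧ IsUnitary UB ∧
        (UA ⊗ₖ UB) * ρ * (UA ⊗ₖ UB)ᴴ = conjM ρ) →
      𝒜 α β ρ = 0)
    (hadd : ∀ (α β α' β' : Type) [Fintype α] [Fintype β] [Fintype α'] [Fintype β']
      [DecidableEq α] [DecidableEq β] [DecidableEq α'] [DecidableEq β']
      (ρ : Matrix (α × β) (α × β) ℂ) (σ : Matrix (α' × β') (α' × β') ℂ),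
      IsDensity ρ → IsDensity σ →
      𝒜 (α × α') (β × β')
        (Matrix.reindex (Equiv.prodProdProdComm α β α' β') (Equiv.prodProdProdComm α β α' β')
          (ρ ⊗ₖ σ)) = 𝒜 α β ρ + 𝒜 α' β' σ)
    {α β : Type} [Fintype α] [Fintype β] [DecidableEq α] [DecidableEq β]
    (ρ : Matrix (α × β) (α × β) ℂ) (hρ : IsDensity ρ) :
    𝒜 α β (conjM ρ) = - 𝒜 α β ρ := by
  have hρc := conjM_density hρ
  have hτ : IsDensity (Matrix.reindex (Equiv.prodProdProdComm α β α β)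
      (Equiv.prodProdProdComm α β α β) (ρ ⊗ₖ conjM ρ)) :=
    reindex_density _ (kron_density hρ hρc)
  have h0 := hvan (α × α) (β × β) _ hτ
    ⟨swapU α, swapU β, swapU_unitary α, swapU_unitary β, key_eq ρ⟩
  have h1 := hadd α β α β ρ (conjM ρ) hρ hρc
  rw [h0] at h1
  linarith
end
end

section
/- The quantity J₂(ρ_{AB}) = i Tr(ρ_{AB} {[K_{AB}, K_A], K_B}) is real, additive under tensor products (with bipartition AA'|BB'), invariant under local unitaries, and satisfies J₂(ρ*) = −J₂(ρ); in particular J₂ vanishes on bipartite non-chiral states. -/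
open Matrix Kronecker BigOperators
open scoped ComplexOrder

noncomputable section

/-- Commutator of matrices. -/
def commM {α : Type*} [Fintype α] (X Y : Matrix α α ℂ) : Matrix α α ℂ := X * Y - Y * X

/-- Anticommutator of matrices. -/
def acommM {α : Type*} [Fintype α] (X Y : Matrix α α ℂ) : Matrix α α ℂ := X * Y + Y * X

/-- `J₂(ρ_AB) = i Tr(ρ_AB {[K_AB, K_A], K_B})`, written in terms of the modular
Hamiltonians `K_A, K_B, K_AB` (lifted to the full space). -/
def J2 {a b : Type} [Fintype a] [Fintype b] [DecidableEq a] [DecidableEq b]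
    (ρ : Matrix (a × b) (a × b) ℂ) (KA : Matrix a a ℂ) (KB : Matrix b b ℂ)
    (KAB : Matrix (a × b) (a × b) ℂ) : ℂ :=
  Complex.I *
    (ρ * acommM (commM KAB (KA ⊗ₖ (1 : Matrix b b ℂ))) ((1 : Matrix a a ℂ) ⊗ₖ KB)).trace


/-! ### Auxiliary lemmas -/

section Aux

open Polynomial

variable {n : Type*} [Fintype n] [DecidableEq n]

lemma aeval_units_conj (u : (Matrix n n ℂ)ˣ) (x : Matrix n n ℂ) (p : ℂ[X]) :
    aeval ((u : Matrix n n ℂ) * x * (↑u⁻¹ : Matrix n n ℂ)) p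
      = (u : Matrix n n ℂ) * aeval x p * (↑u⁻¹ : Matrix n n ℂ) := by
  induction p using Polynomial.induction_on' with
  | add p q hp hq => rw [map_add, map_add, hp, hq, mul_add, add_mul]
  | monomial k c =>
      rw [aeval_monomial, aeval_monomial, Units.conj_pow]
      rw [← mul_assoc, ← mul_assoc, Algebra.commutes c (u : Matrix n n ℂ),
        mul_assoc ((u : Matrix n n ℂ)) _ (x ^ k)]

lemma aeval_diagonal (d : n → ℂ) (p : ℂ[X]) :
    aeval (Matrix.diagonal d) p = Matrix.diagonal (fun i => p.eval (d i)) := by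
  induction p using Polynomial.induction_on' with
  | add p q hp hq => rw [map_add, hp, hq, diagonal_add]; simp [eval_add]
  | monomial k c =>
      simp [aeval_monomial, eval_monomial, Matrix.diagonal_pow,
        Matrix.algebraMap_eq_diagonal, Matrix.diagonal_mul_diagonal]

lemma herm_aeval_exp (p : ℂ[X]) {K : Matrix n n ℂ}
    (hK : K.IsHermitian)
    (hp : ∀ i, p.eval ((Real.exp (hK.eigenvalues i) : ℝ) : ℂ) = ((hK.eigenvalues i : ℝ) : ℂ)) :
    aeval (NormedSpace.exp K) p = K := by
  set U : Matrix n n ℂ := (hK.eigenvectorUnitary : Matrix n n ℂ) with hUdef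
  have hU1 : U * star U = 1 := Unitary.mul_star_self_of_mem hK.eigenvectorUnitary.2
  have hU2 : star U * U = 1 := Unitary.star_mul_self_of_mem hK.eigenvectorUnitary.2
  set u : (Matrix n n ℂ)ˣ := ⟨U, star U, hU1, hU2⟩ with hu
  have hcoe : (↑u⁻¹ : Matrix n n ℂ) = star U := rfl
  have hspec : K = (u : Matrix n n ℂ) * Matrix.diagonal (fun i => ((hK.eigenvalues i : ℝ) : ℂ))
      * (↑u⁻¹ : Matrix n n ℂ) := by
    rw [hcoe]
    exact hK.spectral_theorem
  have hexp : NormedSpace.exp K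
      = (u : Matrix n n ℂ) * Matrix.diagonal (fun i => ((Real.exp (hK.eigenvalues i) : ℝ) : ℂ))
        * (↑u⁻¹ : Matrix n n ℂ) := by
    conv_lhs => rw [hspec]
    rw [Matrix.exp_units_conj, Matrix.exp_diagonal]
    have hfun : (NormedSpace.exp fun i => ((hK.eigenvalues i : ℝ) : ℂ))
        = fun i => ((Real.exp (hK.eigenvalues i) : ℝ) : ℂ) := by
      funext i
      rw [Pi.coe_exp, ← Complex.exp_eq_exp_ℂ, Complex.ofReal_exp]
    rw [hfun]
  rw [hexp, aeval_units_conj, aeval_diagonal]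
  conv_rhs => rw [hspec]
  have hfun2 : (fun i => eval ((Real.exp (hK.eigenvalues i) : ℝ) : ℂ) p)
      = fun i => ((hK.eigenvalues i : ℝ) : ℂ) := funext hp
  rw [hfun2]

/-- `exp` is injective on Hermitian matrices. -/
lemma herm_exp_inj {K L : Matrix n n ℂ}
    (hK : K.IsHermitian) (hL : L.IsHermitian)
    (h : NormedSpace.exp K = NormedSpace.exp L) : K = L := by
  classical
  set s : Finset ℝ := Finset.univ.image hK.eigenvalues ∪ Finset.univ.image hL.eigenvalues with hs
  set v : ℝ → ℂ := fun x => ((Real.exp x : ℝ) : ℂ) with hv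
  have hinj : Set.InjOn v s := by
    intro x _ y _ hxy
    simp only [hv, Complex.ofReal_inj] at hxy
    exact Real.exp_injective hxy
  set p : ℂ[X] := Lagrange.interpolate s v (fun x => (x : ℂ)) with hp
  have hnode : ∀ x ∈ s, p.eval (v x) = (x : ℂ) := fun x hx =>
    Lagrange.eval_interpolate_at_node _ hinj hx
  have h1 : aeval (NormedSpace.exp K) p = K :=
    herm_aeval_exp p hK (fun i => hnode _ (by simp [hs]))
  have h2 : aeval (NormedSpace.exp L) p = L :=
    herm_aeval_exp p hL (fun i => hnode _ (by simp [hs]))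
  rw [← h1, ← h2, h]

lemma exp_neg_commute (K : Matrix n n ℂ) :
    NormedSpace.exp (-K) * K = K * NormedSpace.exp (-K) :=
  ((Commute.refl K).neg_left.exp_left)

lemma sandwich_mul (V X Y : Matrix n n ℂ) (h : Vᴴ * V = 1) :
    (V * X * Vᴴ) * (V * Y * Vᴴ) = V * (X * Y) * Vᴴ := by
  simp only [Matrix.mul_assoc]
  rw [← Matrix.mul_assoc Vᴴ V, h, Matrix.one_mul]

lemma commM_sandwich {V X Y : Matrix n n ℂ} (h : Vᴴ * V = 1) :
    commM (V * X * Vᴴ) (V * Y * Vᴴ) = V * commM X Y * Vᴴ := by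
  simp only [commM, sandwich_mul _ _ _ h, Matrix.mul_sub, Matrix.sub_mul]

lemma acommM_sandwich {V X Y : Matrix n n ℂ} (h : Vᴴ * V = 1) :
    acommM (V * X * Vᴴ) (V * Y * Vᴴ) = V * acommM X Y * Vᴴ := by
  simp only [acommM, sandwich_mul _ _ _ h, Matrix.mul_add, Matrix.add_mul]

lemma commM_conjT (X Y : Matrix n n ℂ) : (commM X Y)ᴴ = commM Yᴴ Xᴴ := by
  simp [commM, Matrix.conjTranspose_sub, Matrix.conjTranspose_mul]

lemma acommM_conjT (X Y : Matrix n n ℂ) : (acommM X Y)ᴴ = acommM Xᴴ Yᴴ := by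
  simp [acommM, Matrix.conjTranspose_add, Matrix.conjTranspose_mul, add_comm]

lemma commM_transposeM (X Y : Matrix n n ℂ) : (commM X Y)ᵀ = commM Yᵀ Xᵀ := by
  simp [commM, Matrix.transpose_sub, Matrix.transpose_mul]

lemma acommM_transposeM (X Y : Matrix n n ℂ) : (acommM X Y)ᵀ = acommM Yᵀ Xᵀ := by
  simp [acommM, Matrix.transpose_add, Matrix.transpose_mul, add_comm]

lemma commM_swap (X Y : Matrix n n ℂ) : commM X Y = - commM Y X := by
  simp [commM]

lemma acommM_comm (X Y : Matrix n n ℂ) : acommM X Y = acommM Y X := by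
  simp [acommM, add_comm]

lemma acommM_neg_left (X Y : Matrix n n ℂ) : acommM (-X) Y = -acommM X Y := by
  simp only [acommM, Matrix.neg_mul, Matrix.mul_neg, neg_add]

lemma trace_comm_zero {ρ K X : Matrix n n ℂ} (h : ρ * K = K * ρ) :
    (ρ * commM K X).trace = 0 := by
  rw [commM, Matrix.mul_sub, trace_sub, sub_eq_zero, ← Matrix.mul_assoc, h,
    Matrix.mul_assoc, Matrix.trace_mul_comm K (ρ * X), Matrix.mul_assoc]

variable {a b : Type} [Fintype a] [Fintype b] [DecidableEq a] [DecidableEq b]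

lemma kron_conjT_s7 (X : Matrix a a ℂ) (Y : Matrix b b ℂ) : (X ⊗ₖ Y)ᴴ = Xᴴ ⊗ₖ Yᴴ := by
  ext ⟨i, j⟩ ⟨k, l⟩
  simp [Matrix.conjTranspose_apply, Matrix.kroneckerMap_apply]

lemma kron_transposeM (X : Matrix a a ℂ) (Y : Matrix b b ℂ) : (X ⊗ₖ Y)ᵀ = Xᵀ ⊗ₖ Yᵀ := by
  ext ⟨i, j⟩ ⟨k, l⟩
  simp [Matrix.transpose_apply, Matrix.kroneckerMap_apply]

lemma kron_mul_left1 (X Y : Matrix a a ℂ) :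
    (X ⊗ₖ (1 : Matrix b b ℂ)) * (Y ⊗ₖ (1 : Matrix b b ℂ)) = (X * Y) ⊗ₖ 1 := by
  rw [← Matrix.mul_kronecker_mul, Matrix.one_mul]

lemma kron_mul_right1 (X Y : Matrix b b ℂ) :
    ((1 : Matrix a a ℂ) ⊗ₖ X) * ((1 : Matrix a a ℂ) ⊗ₖ Y) = 1 ⊗ₖ (X * Y) := by
  rw [← Matrix.mul_kronecker_mul, Matrix.one_mul]

lemma kron_cross (X : Matrix a a ℂ) (Y : Matrix b b ℂ) :
    (X ⊗ₖ (1 : Matrix b b ℂ)) * ((1 : Matrix a a ℂ) ⊗ₖ Y) = X ⊗ₖ Y := by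
  rw [← Matrix.mul_kronecker_mul, Matrix.mul_one, Matrix.one_mul]

lemma kron_cross' (X : Matrix a a ℂ) (Y : Matrix b b ℂ) :
    ((1 : Matrix a a ℂ) ⊗ₖ Y) * (X ⊗ₖ (1 : Matrix b b ℂ)) = X ⊗ₖ Y := by
  rw [← Matrix.mul_kronecker_mul, Matrix.mul_one, Matrix.one_mul]

end Aux

/-! ### The main structural lemmas about `J2` -/

section J2lemmas

variable {a b : Type} [Fintype a] [Fintype b] [DecidableEq a] [DecidableEq b]

/-- Reality of `J2`. -/
lemma J2_real (ρ KAB : Matrix (a × b) (a × b) ℂ) (KA : Matrix a a ℂ) (KB : Matrix b b ℂ)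
    (hρ : ρ.IsHermitian) (hKA : KA.IsHermitian) (hKB : KB.IsHermitian)
    (hKAB : KAB.IsHermitian) :
    (starRingEnd ℂ) (J2 ρ KA KB KAB) = J2 ρ KA KB KAB := by
  set A : Matrix (a × b) (a × b) ℂ := KA ⊗ₖ (1 : Matrix b b ℂ) with hA
  set B : Matrix (a × b) (a × b) ℂ := (1 : Matrix a a ℂ) ⊗ₖ KB with hB
  have hAH : Aᴴ = A := by rw [hA, kron_conjT_s7, hKA.eq, Matrix.conjTranspose_one]
  have hBH : Bᴴ = B := by rw [hB, kron_conjT_s7, hKB.eq, Matrix.conjTranspose_one]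
  set M : Matrix (a × b) (a × b) ℂ := acommM (commM KAB A) B with hM
  have hMH : Mᴴ = -M := by
    rw [hM, acommM_conjT, commM_conjT, hAH, hKAB.eq, hBH, commM_swap A KAB,
      acommM_neg_left]
  have h2 : (ρ * M)ᴴ = (-M) * ρ := by rw [Matrix.conjTranspose_mul, hMH, hρ.eq]
  have htr : (starRingEnd ℂ) (ρ * M).trace = -(ρ * M).trace := by
    calc (starRingEnd ℂ) (ρ * M).trace = ((ρ * M)ᴴ).trace :=
          (Matrix.trace_conjTranspose _).symm
      _ = -(ρ * M).trace := by
          rw [h2, Matrix.neg_mul, trace_neg, Matrix.trace_mul_comm]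
  show (starRingEnd ℂ) (Complex.I * (ρ * M).trace) = Complex.I * (ρ * M).trace
  rw [RingHom.map_mul, Complex.conj_I, htr, neg_mul_neg]

/-- Local-unitary invariance of `J2`. -/
lemma J2_lu (ρ KAB : Matrix (a × b) (a × b) ℂ) (KA : Matrix a a ℂ) (KB : Matrix b b ℂ)
    (UA : Matrix a a ℂ) (UB : Matrix b b ℂ) (hUA : IsUnitary UA) (hUB : IsUnitary UB) :
    J2 ((UA ⊗ₖ UB) * ρ * (UA ⊗ₖ UB)ᴴ) (UA * KA * UAᴴ) (UB * KB * UBᴴ)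
        ((UA ⊗ₖ UB) * KAB * (UA ⊗ₖ UB)ᴴ) = J2 ρ KA KB KAB := by
  set V : Matrix (a × b) (a × b) ℂ := UA ⊗ₖ UB with hV
  have hVH : Vᴴ = UAᴴ ⊗ₖ UBᴴ := kron_conjT_s7 UA UB
  have hV2 : Vᴴ * V = 1 := by
    rw [hVH, hV, ← Matrix.mul_kronecker_mul, hUA.2, hUB.2, Matrix.one_kronecker_one]
  have hAeq : V * (KA ⊗ₖ (1 : Matrix b b ℂ)) * Vᴴ = (UA * KA * UAᴴ) ⊗ₖ 1 := by
    rw [hVH, hV, ← Matrix.mul_kronecker_mul, ← Matrix.mul_kronecker_mul, Matrix.mul_one,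
      hUB.1]
  have hBeq : V * ((1 : Matrix a a ℂ) ⊗ₖ KB) * Vᴴ = 1 ⊗ₖ (UB * KB * UBᴴ) := by
    rw [hVH, hV, ← Matrix.mul_kronecker_mul, ← Matrix.mul_kronecker_mul, Matrix.mul_one,
      hUA.1]
  show Complex.I * ((V * ρ * Vᴴ) *
      acommM (commM (V * KAB * Vᴴ) ((UA * KA * UAᴴ) ⊗ₖ 1)) ((1 : Matrix a a ℂ) ⊗ₖ (UB * KB * UBᴴ))).trace
    = _
  rw [← hAeq, ← hBeq, commM_sandwich hV2, acommM_sandwich hV2, sandwich_mul _ _ _ hV2]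
  have : (V * (ρ * acommM (commM KAB (KA ⊗ₖ (1 : Matrix b b ℂ))) ((1 : Matrix a a ℂ) ⊗ₖ KB)) * Vᴴ).trace
      = (ρ * acommM (commM KAB (KA ⊗ₖ (1 : Matrix b b ℂ))) ((1 : Matrix a a ℂ) ⊗ₖ KB)).trace := by
    rw [Matrix.trace_mul_comm, ← Matrix.mul_assoc, hV2, Matrix.one_mul]
  rw [this]
  rfl

/-- Conjugation oddness of `J2`. -/
lemma J2_conj_odd (ρ KAB : Matrix (a × b) (a × b) ℂ) (KA : Matrix a a ℂ) (KB : Matrix b b ℂ)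
    (hρ : ρ.IsHermitian) :
    J2 (conjM ρ) KAᵀ KBᵀ KABᵀ = - J2 ρ KA KB KAB := by
  set A : Matrix (a × b) (a × b) ℂ := KA ⊗ₖ (1 : Matrix b b ℂ) with hA
  set B : Matrix (a × b) (a × b) ℂ := (1 : Matrix a a ℂ) ⊗ₖ KB with hB
  set M : Matrix (a × b) (a × b) ℂ := acommM (commM KAB A) B with hM
  have hAT : KAᵀ ⊗ₖ (1 : Matrix b b ℂ) = Aᵀ := by rw [hA, kron_transposeM, Matrix.transpose_one]
  have hBT : (1 : Matrix a a ℂ) ⊗ₖ KBᵀ = Bᵀ := by rw [hB, kron_transposeM, Matrix.transpose_one]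
  have hconj : conjM ρ = ρᵀ := by
    ext i j
    simpa [conjM, Matrix.transpose_apply] using congrFun (congrFun hρ.eq j) i
  have hM' : acommM (commM KABᵀ Aᵀ) Bᵀ = -Mᵀ := by
    have h1 : commM KABᵀ Aᵀ = -(commM KAB A)ᵀ := by
      rw [← commM_transposeM, commM_swap A KAB, Matrix.transpose_neg]
    rw [h1, acommM_neg_left, hM]
    rw [acommM_transposeM, acommM_comm]
  show Complex.I * ((conjM ρ) * acommM (commM KABᵀ (KAᵀ ⊗ₖ (1 : Matrix b b ℂ)))
      ((1 : Matrix a a ℂ) ⊗ₖ KBᵀ)).trace = _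
  rw [hAT, hBT, hM', hconj]
  have : (ρᵀ * -Mᵀ).trace = -(ρ * M).trace := by
    rw [Matrix.mul_neg, trace_neg, ← Matrix.transpose_mul, Matrix.trace_transpose,
      Matrix.trace_mul_comm]
  rw [this]
  show Complex.I * -(ρ * M).trace = -(Complex.I * (ρ * M).trace)
  ring

end J2lemmas

/-! ### Partial trace lemmas -/

section PTrace

variable {a b : Type} [Fintype a] [Fintype b] [DecidableEq a] [DecidableEq b]

lemma traceB_kron_left (X : Matrix a a ℂ) (M : Matrix (a × b) (a × b) ℂ) :
    traceB ((X ⊗ₖ (1 : Matrix b b ℂ)) * M) = X * traceB M := by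
  ext x x'
  simp only [traceB, Matrix.mul_apply, Matrix.kroneckerMap_apply, Fintype.sum_prod_type,
    Matrix.one_apply, mul_ite, mul_one, mul_zero, ite_mul, zero_mul,
    Finset.sum_ite_irrel, Finset.sum_const_zero, Finset.sum_ite_eq, Finset.sum_ite_eq', Finset.mem_univ, if_true, Finset.mul_sum]
  exact Finset.sum_comm

lemma traceB_kron_right (X : Matrix a a ℂ) (M : Matrix (a × b) (a × b) ℂ) :
    traceB (M * (X ⊗ₖ (1 : Matrix b b ℂ))) = traceB M * X := by
  ext x x'
  simp only [traceB, Matrix.mul_apply, Matrix.kroneckerMap_apply, Fintype.sum_prod_type,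
    Matrix.one_apply, mul_ite, mul_one, mul_zero, ite_mul, zero_mul,
    Finset.sum_ite_irrel, Finset.sum_const_zero, Finset.sum_ite_eq, Finset.sum_ite_eq', Finset.mem_univ, if_true, Finset.sum_mul]
  exact Finset.sum_comm

lemma traceB_kron_comm (N : Matrix b b ℂ) (M : Matrix (a × b) (a × b) ℂ) :
    traceB (((1 : Matrix a a ℂ) ⊗ₖ N) * M) = traceB (M * ((1 : Matrix a a ℂ) ⊗ₖ N)) := by
  ext x x'
  simp only [traceB, Matrix.mul_apply, Matrix.kroneckerMap_apply, Fintype.sum_prod_type,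
    Matrix.one_apply, mul_ite, mul_one, mul_zero, ite_mul, zero_mul, one_mul,
    Finset.sum_ite_irrel, Finset.sum_const_zero, Finset.sum_ite_eq, Finset.sum_ite_eq', Finset.mem_univ, if_true]
  rw [Finset.sum_comm]
  exact Finset.sum_congr rfl fun y _ => Finset.sum_congr rfl fun v _ => mul_comm _ _

lemma traceA_kron_left (Y : Matrix b b ℂ) (M : Matrix (a × b) (a × b) ℂ) :
    traceA (((1 : Matrix a a ℂ) ⊗ₖ Y) * M) = Y * traceA M := by
  ext y y'
  simp only [traceA, Matrix.mul_apply, Matrix.kroneckerMap_apply, Fintype.sum_prod_type,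
    Matrix.one_apply, mul_ite, mul_one, mul_zero, ite_mul, zero_mul, one_mul,
    Finset.sum_ite_irrel, Finset.sum_const_zero, Finset.sum_ite_eq, Finset.sum_ite_eq', Finset.mem_univ, if_true, Finset.mul_sum]
  exact Finset.sum_comm

lemma traceA_kron_right (Y : Matrix b b ℂ) (M : Matrix (a × b) (a × b) ℂ) :
    traceA (M * ((1 : Matrix a a ℂ) ⊗ₖ Y)) = traceA M * Y := by
  ext y y'
  simp only [traceA, Matrix.mul_apply, Matrix.kroneckerMap_apply, Fintype.sum_prod_type,
    Matrix.one_apply, mul_ite, mul_one, mul_zero, ite_mul, zero_mul, one_mul,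
    Finset.sum_ite_irrel, Finset.sum_const_zero, Finset.sum_ite_eq, Finset.sum_ite_eq', Finset.mem_univ, if_true, Finset.sum_mul]
  exact Finset.sum_comm

lemma traceA_kron_comm (N : Matrix a a ℂ) (M : Matrix (a × b) (a × b) ℂ) :
    traceA ((N ⊗ₖ (1 : Matrix b b ℂ)) * M) = traceA (M * (N ⊗ₖ (1 : Matrix b b ℂ))) := by
  ext y y'
  simp only [traceA, Matrix.mul_apply, Matrix.kroneckerMap_apply, Fintype.sum_prod_type,
    Matrix.one_apply, mul_ite, mul_one, mul_zero, ite_mul, zero_mul, one_mul,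
    Finset.sum_ite_irrel, Finset.sum_const_zero, Finset.sum_ite_eq, Finset.sum_ite_eq', Finset.mem_univ, if_true]
  rw [Finset.sum_comm]
  exact Finset.sum_congr rfl fun y _ => Finset.sum_congr rfl fun v _ => mul_comm _ _

lemma traceB_conj_unitary (UA : Matrix a a ℂ) (UB : Matrix b b ℂ)
    (hUB : IsUnitary UB) (ρ : Matrix (a × b) (a × b) ℂ) :
    traceB ((UA ⊗ₖ UB) * ρ * (UA ⊗ₖ UB)ᴴ) = UA * traceB ρ * UAᴴ := by
  have hsplit : (UA ⊗ₖ UB : Matrix (a × b) (a × b) ℂ)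
      = (UA ⊗ₖ (1 : Matrix b b ℂ)) * ((1 : Matrix a a ℂ) ⊗ₖ UB) := (kron_cross _ _).symm
  have hsplitH : ((UA ⊗ₖ UB) : Matrix (a × b) (a × b) ℂ)ᴴ
      = ((1 : Matrix a a ℂ) ⊗ₖ UBᴴ) * (UAᴴ ⊗ₖ (1 : Matrix b b ℂ)) := by
    rw [kron_conjT_s7, ← kron_cross']
  rw [hsplitH, hsplit]
  have hassoc : (UA ⊗ₖ (1 : Matrix b b ℂ)) * ((1 : Matrix a a ℂ) ⊗ₖ UB) * ρ *
        (((1 : Matrix a a ℂ) ⊗ₖ UBᴴ) * (UAᴴ ⊗ₖ (1 : Matrix b b ℂ)))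
      = (UA ⊗ₖ (1 : Matrix b b ℂ)) *
        ((((1 : Matrix a a ℂ) ⊗ₖ UB) * (ρ * ((1 : Matrix a a ℂ) ⊗ₖ UBᴴ))) *
          (UAᴴ ⊗ₖ (1 : Matrix b b ℂ))) := by
    simp only [Matrix.mul_assoc]
  rw [hassoc, traceB_kron_left, traceB_kron_right, traceB_kron_comm,
    Matrix.mul_assoc, kron_mul_right1, hUB.2, Matrix.one_kronecker_one, Matrix.mul_one]
  exact (Matrix.mul_assoc _ _ _).symm

lemma traceA_conj_unitary (UA : Matrix a a ℂ) (UB : Matrix b b ℂ)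
    (hUA : IsUnitary UA) (ρ : Matrix (a × b) (a × b) ℂ) :
    traceA ((UA ⊗ₖ UB) * ρ * (UA ⊗ₖ UB)ᴴ) = UB * traceA ρ * UBᴴ := by
  have hsplit : (UA ⊗ₖ UB : Matrix (a × b) (a × b) ℂ)
      = ((1 : Matrix a a ℂ) ⊗ₖ UB) * (UA ⊗ₖ (1 : Matrix b b ℂ)) := (kron_cross' _ _).symm
  have hsplitH : ((UA ⊗ₖ UB) : Matrix (a × b) (a × b) ℂ)ᴴ
      = (UAᴴ ⊗ₖ (1 : Matrix b b ℂ)) * ((1 : Matrix a a ℂ) ⊗ₖ UBᴴ) := by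
    rw [kron_conjT_s7, ← kron_cross]
  rw [hsplitH, hsplit]
  have hassoc : ((1 : Matrix a a ℂ) ⊗ₖ UB) * (UA ⊗ₖ (1 : Matrix b b ℂ)) * ρ *
        ((UAᴴ ⊗ₖ (1 : Matrix b b ℂ)) * ((1 : Matrix a a ℂ) ⊗ₖ UBᴴ))
      = ((1 : Matrix a a ℂ) ⊗ₖ UB) *
        (((UA ⊗ₖ (1 : Matrix b b ℂ)) * (ρ * (UAᴴ ⊗ₖ (1 : Matrix b b ℂ)))) *
          ((1 : Matrix a a ℂ) ⊗ₖ UBᴴ)) := by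
    simp only [Matrix.mul_assoc]
  rw [hassoc, traceA_kron_left, traceA_kron_right, traceA_kron_comm,
    Matrix.mul_assoc, kron_mul_left1, hUA.2, Matrix.one_kronecker_one, Matrix.mul_one]
  exact (Matrix.mul_assoc _ _ _).symm

lemma traceB_conjM (ρ : Matrix (a × b) (a × b) ℂ) :
    traceB (conjM ρ) = conjM (traceB ρ) := by
  ext x x'
  simp [traceB, conjM, map_sum]

lemma traceA_conjM (ρ : Matrix (a × b) (a × b) ℂ) :
    traceA (conjM ρ) = conjM (traceA ρ) := by
  ext y y'
  simp [traceA, conjM, map_sum]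

lemma conjM_eq_transpose {ρ : Matrix a a ℂ} (hρ : ρ.IsHermitian) : conjM ρ = ρᵀ := by
  ext i j
  simpa [conjM, Matrix.transpose_apply] using congrFun (congrFun hρ.eq j) i

end PTrace

/-! ### Additivity -/

section Additivity

variable {a b a' b' : Type}
    [Fintype a] [Fintype b] [DecidableEq a] [DecidableEq b]
    [Fintype a'] [Fintype b'] [DecidableEq a'] [DecidableEq b']

lemma trace_reindex {m l : Type*} [Fintype m] [Fintype l] (e : m ≃ l) (M : Matrix m m ℂ) :
    (Matrix.reindex e e M).trace = M.trace := by
  simp only [Matrix.trace, Matrix.diag, Matrix.reindex_apply, Matrix.submatrix_apply]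
  exact Equiv.sum_comp e.symm (fun j => M j j)

lemma reindex_mulM {m l : Type*} [Fintype m] [Fintype l] (e : m ≃ l) (M N : Matrix m m ℂ) :
    Matrix.reindex e e (M * N) = Matrix.reindex e e M * Matrix.reindex e e N := by
  simp only [Matrix.reindex_apply]
  exact (Matrix.submatrix_mul_equiv M N _ _ _).symm

lemma reindex_addM {m l : Type*} (e : m ≃ l) (M N : Matrix m m ℂ) :
    Matrix.reindex e e (M + N) = Matrix.reindex e e M + Matrix.reindex e e N := by
  ext i j
  simp [Matrix.reindex_apply]

lemma reindex_subM {m l : Type*} (e : m ≃ l) (M N : Matrix m m ℂ) :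
    Matrix.reindex e e (M - N) = Matrix.reindex e e M - Matrix.reindex e e N := by
  ext i j
  simp [Matrix.reindex_apply]

lemma reindex_commM {m l : Type*} [Fintype m] [Fintype l] (e : m ≃ l) (M N : Matrix m m ℂ) :
    Matrix.reindex e e (commM M N) = commM (Matrix.reindex e e M) (Matrix.reindex e e N) := by
  simp only [commM, reindex_subM, reindex_mulM]

lemma reindex_acommM {m l : Type*} [Fintype m] [Fintype l] (e : m ≃ l) (M N : Matrix m m ℂ) :
    Matrix.reindex e e (acommM M N) = acommM (Matrix.reindex e e M) (Matrix.reindex e e N) := by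
  simp only [acommM, reindex_addM, reindex_mulM]

lemma reindex_kron4 (X1 : Matrix a a ℂ) (X2 : Matrix b b ℂ) (Y1 : Matrix a' a' ℂ)
    (Y2 : Matrix b' b' ℂ) :
    Matrix.reindex (Equiv.prodProdProdComm a b a' b') (Equiv.prodProdProdComm a b a' b')
        ((X1 ⊗ₖ X2) ⊗ₖ (Y1 ⊗ₖ Y2)) = (X1 ⊗ₖ Y1) ⊗ₖ (X2 ⊗ₖ Y2) := by
  ext ⟨⟨i, k⟩, ⟨j, l⟩⟩ ⟨⟨i', k'⟩, ⟨j', l'⟩⟩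
  simp only [Matrix.reindex_apply, Matrix.submatrix_apply, Equiv.prodProdProdComm,
    Equiv.coe_fn_symm_mk, Matrix.kroneckerMap_apply]
  ring

lemma sub_kron {s t : Type} [Fintype s] [Fintype t] (X Y : Matrix s s ℂ) (Z : Matrix t t ℂ) :
    (X - Y) ⊗ₖ Z = X ⊗ₖ Z - Y ⊗ₖ Z := by
  ext ⟨i, j⟩ ⟨k, l⟩
  simp [Matrix.kroneckerMap_apply, sub_mul]

lemma kron_sub {s t : Type} [Fintype s] [Fintype t] (X : Matrix s s ℂ) (Y Z : Matrix t t ℂ) :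
    X ⊗ₖ (Y - Z) = X ⊗ₖ Y - X ⊗ₖ Z := by
  ext ⟨i, j⟩ ⟨k, l⟩
  simp [Matrix.kroneckerMap_apply, mul_sub]

lemma commM_kron_split {s t : Type} [Fintype s] [Fintype t] [DecidableEq s] [DecidableEq t]
    (P Q : Matrix s s ℂ) (P' Q' : Matrix t t ℂ) :
    commM (P ⊗ₖ (1 : Matrix t t ℂ) + (1 : Matrix s s ℂ) ⊗ₖ P')
        (Q ⊗ₖ (1 : Matrix t t ℂ) + (1 : Matrix s s ℂ) ⊗ₖ Q')
      = (commM P Q) ⊗ₖ 1 + 1 ⊗ₖ (commM P' Q') := by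
  simp only [commM, Matrix.add_mul, Matrix.mul_add, kron_mul_left1, kron_mul_right1,
    kron_cross, kron_cross', sub_kron, kron_sub]
  abel

lemma acommM_kron_split {s t : Type} [Fintype s] [Fintype t] [DecidableEq s] [DecidableEq t]
    (C B : Matrix s s ℂ) (C' B' : Matrix t t ℂ) :
    acommM (C ⊗ₖ (1 : Matrix t t ℂ) + (1 : Matrix s s ℂ) ⊗ₖ C')
        (B ⊗ₖ (1 : Matrix t t ℂ) + (1 : Matrix s s ℂ) ⊗ₖ B')
      = (acommM C B) ⊗ₖ 1 + 1 ⊗ₖ (acommM C' B')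
        + (C ⊗ₖ B' + C ⊗ₖ B') + (B ⊗ₖ C' + B ⊗ₖ C') := by
  simp only [acommM, Matrix.add_mul, Matrix.mul_add, kron_mul_left1, kron_mul_right1,
    kron_cross, kron_cross', Matrix.add_kronecker, Matrix.kronecker_add]
  abel

lemma trace_kron_mul {s t : Type} [Fintype s] [Fintype t]
    (ρ X : Matrix s s ℂ) (σ Y : Matrix t t ℂ) :
    ((ρ ⊗ₖ σ) * (X ⊗ₖ Y)).trace = (ρ * X).trace * (σ * Y).trace := by
  rw [← Matrix.mul_kronecker_mul, Matrix.trace_kronecker]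

lemma J2_add (ρ KAB : Matrix (a × b) (a × b) ℂ) (KA : Matrix a a ℂ) (KB : Matrix b b ℂ)
    (σ LAB : Matrix (a' × b') (a' × b') ℂ) (LA : Matrix a' a' ℂ) (LB : Matrix b' b' ℂ)
    (hρc : ρ * KAB = KAB * ρ) (hσc : σ * LAB = LAB * σ)
    (htrρ : ρ.trace = 1) (htrσ : σ.trace = 1) :
    J2 (Matrix.reindex (Equiv.prodProdProdComm a b a' b') (Equiv.prodProdProdComm a b a' b')
          (ρ ⊗ₖ σ))
        (KA ⊗ₖ (1 : Matrix a' a' ℂ) + (1 : Matrix a a ℂ) ⊗ₖ LA)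
        (KB ⊗ₖ (1 : Matrix b' b' ℂ) + (1 : Matrix b b ℂ) ⊗ₖ LB)
        (Matrix.reindex (Equiv.prodProdProdComm a b a' b') (Equiv.prodProdProdComm a b a' b')
          (KAB ⊗ₖ (1 : Matrix (a' × b') (a' × b') ℂ)
            + (1 : Matrix (a × b) (a × b) ℂ) ⊗ₖ LAB))
      = J2 ρ KA KB KAB + J2 σ LA LB LAB := by
  set e := Equiv.prodProdProdComm a b a' b' with he
  set A : Matrix (a × b) (a × b) ℂ := KA ⊗ₖ (1 : Matrix b b ℂ) with hA
  set B : Matrix (a × b) (a × b) ℂ := (1 : Matrix a a ℂ) ⊗ₖ KB with hB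
  set A' : Matrix (a' × b') (a' × b') ℂ := LA ⊗ₖ (1 : Matrix b' b' ℂ) with hA'
  set B' : Matrix (a' × b') (a' × b') ℂ := (1 : Matrix a' a' ℂ) ⊗ₖ LB with hB'
  have e1 : (1 : Matrix (a' × b') (a' × b') ℂ)
      = (1 : Matrix a' a' ℂ) ⊗ₖ (1 : Matrix b' b' ℂ) := (Matrix.one_kronecker_one).symm
  have e2 : (1 : Matrix (a × b) (a × b) ℂ)
      = (1 : Matrix a a ℂ) ⊗ₖ (1 : Matrix b b ℂ) := (Matrix.one_kronecker_one).symm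
  have e3 : (1 : Matrix (b × b') (b × b') ℂ)
      = (1 : Matrix b b ℂ) ⊗ₖ (1 : Matrix b' b' ℂ) := (Matrix.one_kronecker_one).symm
  have e4 : (1 : Matrix (a × a') (a × a') ℂ)
      = (1 : Matrix a a ℂ) ⊗ₖ (1 : Matrix a' a' ℂ) := (Matrix.one_kronecker_one).symm
  have hAtot : (KA ⊗ₖ (1 : Matrix a' a' ℂ) + (1 : Matrix a a ℂ) ⊗ₖ LA)
        ⊗ₖ (1 : Matrix (b × b') (b × b') ℂ)
      = Matrix.reindex e e (A ⊗ₖ (1 : Matrix (a' × b') (a' × b') ℂ)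
          + (1 : Matrix (a × b) (a × b) ℂ) ⊗ₖ A') := by
    rw [hA, hA', e1, e2, reindex_addM, reindex_kron4, reindex_kron4, e3,
      Matrix.add_kronecker]
  have hBtot : (1 : Matrix (a × a') (a × a') ℂ)
        ⊗ₖ (KB ⊗ₖ (1 : Matrix b' b' ℂ) + (1 : Matrix b b ℂ) ⊗ₖ LB)
      = Matrix.reindex e e (B ⊗ₖ (1 : Matrix (a' × b') (a' × b') ℂ)
          + (1 : Matrix (a × b) (a × b) ℂ) ⊗ₖ B') := by
    rw [hB, hB', e1, e2, reindex_addM, reindex_kron4, reindex_kron4, e4,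
      Matrix.kronecker_add]
  show Complex.I * ((Matrix.reindex e e (ρ ⊗ₖ σ)) *
      acommM (commM (Matrix.reindex e e (KAB ⊗ₖ (1 : Matrix (a' × b') (a' × b') ℂ)
            + (1 : Matrix (a × b) (a × b) ℂ) ⊗ₖ LAB))
          ((KA ⊗ₖ (1 : Matrix a' a' ℂ) + (1 : Matrix a a ℂ) ⊗ₖ LA)
            ⊗ₖ (1 : Matrix (b × b') (b × b') ℂ)))
        ((1 : Matrix (a × a') (a × a') ℂ)
          ⊗ₖ (KB ⊗ₖ (1 : Matrix b' b' ℂ) + (1 : Matrix b b ℂ) ⊗ₖ LB))).trace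
    = _
  rw [hAtot, hBtot, ← reindex_commM, ← reindex_acommM, ← reindex_mulM, trace_reindex]
  rw [commM_kron_split, acommM_kron_split]
  set C : Matrix (a × b) (a × b) ℂ := commM KAB A with hC
  set C' : Matrix (a' × b') (a' × b') ℂ := commM LAB A' with hC'
  have hzρ : (ρ * C).trace = 0 := trace_comm_zero hρc
  have hzσ : (σ * C').trace = 0 := trace_comm_zero hσc
  simp only [Matrix.mul_add, trace_add, trace_kron_mul, Matrix.mul_one, htrρ, htrσ,
    hzρ, hzσ]
  show Complex.I * ((ρ * acommM C B).trace * 1 + 1 * (σ * acommM C' B').trace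
      + (0 * (σ * B').trace + 0 * (σ * B').trace)
      + ((ρ * B).trace * 0 + (ρ * B).trace * 0))
    = Complex.I * (ρ * acommM C B).trace + Complex.I * (σ * acommM C' B').trace
  ring

lemma isHermitian_conj_unitary {n : Type*} [Fintype n] [DecidableEq n]
    (U K : Matrix n n ℂ) (hK : K.IsHermitian) : (U * K * Uᴴ).IsHermitian := by
  show (U * K * Uᴴ)ᴴ = _
  rw [Matrix.conjTranspose_mul, Matrix.conjTranspose_mul,
    Matrix.conjTranspose_conjTranspose, hK.eq, ← Matrix.mul_assoc]

lemma exp_neg_conj_unitary {n : Type*} [Fintype n] [DecidableEq n]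
    (U K : Matrix n n ℂ) (hU : IsUnitary U) :
    NormedSpace.exp (-(U * K * Uᴴ)) = U * NormedSpace.exp (-K) * Uᴴ := by
  have hXn : -(U * K * Uᴴ) = U * (-K) * Uᴴ := by
    rw [Matrix.mul_neg, Matrix.neg_mul]
  set u : (Matrix n n ℂ)ˣ := ⟨U, Uᴴ, hU.1, hU.2⟩ with hu
  have hcast : U * (-K) * Uᴴ = (u : Matrix n n ℂ) * (-K) * (↑u⁻¹ : Matrix n n ℂ) := rfl
  rw [hXn, hcast, Matrix.exp_units_conj]
  rfl


end Additivity

/-- `J₂` is real, invariant under local unitaries, additive under tensor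
products (with the bipartition `AA'|BB'`), odd under complex conjugation, and hence
vanishes on bipartite non-chiral states. -/
theorem stmt_7 {a b a' b' : Type}
    [Fintype a] [Fintype b] [DecidableEq a] [DecidableEq b]
    [Fintype a'] [Fintype b'] [DecidableEq a'] [DecidableEq b']
    (ρ : Matrix (a × b) (a × b) ℂ) (KA : Matrix a a ℂ) (KB : Matrix b b ℂ)
    (KAB : Matrix (a × b) (a × b) ℂ)
    (σ : Matrix (a' × b') (a' × b') ℂ) (LA : Matrix a' a' ℂ) (LB : Matrix b' b' ℂ)
    (LAB : Matrix (a' × b') (a' × b') ℂ)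
    (hρ : ρ.PosDef) (htrρ : ρ.trace = 1)
    (hσ : σ.PosDef) (htrσ : σ.trace = 1)
    (hKA : KA.IsHermitian) (hKB : KB.IsHermitian) (hKAB : KAB.IsHermitian)
    (hLA : LA.IsHermitian) (hLB : LB.IsHermitian) (hLAB : LAB.IsHermitian)
    (heA : NormedSpace.exp (-KA) = traceB ρ)
    (heB : NormedSpace.exp (-KB) = traceA ρ)
    (heAB : NormedSpace.exp (-KAB) = ρ)
    (heA' : NormedSpace.exp (-LA) = traceB σ)
    (heB' : NormedSpace.exp (-LB) = traceA σ)
    (heAB' : NormedSpace.exp (-LAB) = σ) :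
    -- (1) reality
    (starRingEnd ℂ) (J2 ρ KA KB KAB) = J2 ρ KA KB KAB ∧
    -- (2) local-unitary invariance
    (∀ (UA : Matrix a a ℂ) (UB : Matrix b b ℂ), IsUnitary UA → IsUnitary UB →
      J2 ((UA ⊗ₖ UB) * ρ * (UA ⊗ₖ UB)ᴴ) (UA * KA * UAᴴ) (UB * KB * UBᴴ)
        ((UA ⊗ₖ UB) * KAB * (UA ⊗ₖ UB)ᴴ) = J2 ρ KA KB KAB) ∧
    -- (3) additivity under tensor products, with bipartition AA'|BB'
    (J2 (Matrix.reindex (Equiv.prodProdProdComm a b a' b') (Equiv.prodProdProdComm a b a' b')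
          (ρ ⊗ₖ σ))
        (KA ⊗ₖ (1 : Matrix a' a' ℂ) + (1 : Matrix a a ℂ) ⊗ₖ LA)
        (KB ⊗ₖ (1 : Matrix b' b' ℂ) + (1 : Matrix b b ℂ) ⊗ₖ LB)
        (Matrix.reindex (Equiv.prodProdProdComm a b a' b') (Equiv.prodProdProdComm a b a' b')
          (KAB ⊗ₖ (1 : Matrix (a' × b') (a' × b') ℂ)
            + (1 : Matrix (a × b) (a × b) ℂ) ⊗ₖ LAB))
      = J2 ρ KA KB KAB + J2 σ LA LB LAB) ∧
    -- (4) oddness under complex conjugation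
    (J2 (conjM ρ) KAᵀ KBᵀ KABᵀ = - J2 ρ KA KB KAB) ∧
    -- (5) vanishing on non-chiral states
    ((∃ (UA : Matrix a a ℂ) (UB : Matrix b b ℂ), IsUnitary UA ∧ IsUnitary UB ∧
        (UA ⊗ₖ UB) * ρ * (UA ⊗ₖ UB)ᴴ = conjM ρ) →
      J2 ρ KA KB KAB = 0) := by
  have hρH : ρ.IsHermitian := hρ.1
  have hσH : σ.IsHermitian := hσ.1
  refine ⟨J2_real ρ KAB KA KB hρH hKA hKB hKAB,
    fun UA UB hUA hUB => J2_lu ρ KAB KA KB UA UB hUA hUB,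
    J2_add ρ KAB KA KB σ LAB LA LB ?_ ?_ htrρ htrσ,
    J2_conj_odd ρ KAB KA KB hρH, ?_⟩
  · rw [← heAB]; exact exp_neg_commute KAB
  · rw [← heAB']; exact exp_neg_commute LAB
  rintro ⟨UA, UB, hUA, hUB, hVc⟩
  have hρA_H : (traceB ρ).IsHermitian := by
    rw [← heA]; exact Matrix.IsHermitian.exp hKA.neg
  have hρB_H : (traceA ρ).IsHermitian := by
    rw [← heB]; exact Matrix.IsHermitian.exp hKB.neg
  have hVu : IsUnitary (UA ⊗ₖ UB) := by
    constructor
    · rw [kron_conjT_s7, ← Matrix.mul_kronecker_mul, hUA.1, hUB.1, Matrix.one_kronecker_one]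
    · rw [kron_conjT_s7, ← Matrix.mul_kronecker_mul, hUA.2, hUB.2, Matrix.one_kronecker_one]
  have hAeq : UA * KA * UAᴴ = KAᵀ := by
    have h3 : NormedSpace.exp (-(UA * KA * UAᴴ)) = NormedSpace.exp (-(KAᵀ)) := by
      rw [exp_neg_conj_unitary _ _ hUA, heA,
        show -(KAᵀ) = (-KA)ᵀ from (Matrix.transpose_neg KA).symm,
        Matrix.exp_transpose, heA, ← traceB_conj_unitary UA UB hUB ρ, hVc, traceB_conjM,
        conjM_eq_transpose hρA_H]
    exact neg_inj.mp (herm_exp_inj (isHermitian_conj_unitary UA KA hKA).neg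
      hKA.transpose.neg h3)
  have hBeq : UB * KB * UBᴴ = KBᵀ := by
    have h3 : NormedSpace.exp (-(UB * KB * UBᴴ)) = NormedSpace.exp (-(KBᵀ)) := by
      rw [exp_neg_conj_unitary _ _ hUB, heB,
        show -(KBᵀ) = (-KB)ᵀ from (Matrix.transpose_neg KB).symm,
        Matrix.exp_transpose, heB, ← traceA_conj_unitary UA UB hUA ρ, hVc, traceA_conjM,
        conjM_eq_transpose hρB_H]
    exact neg_inj.mp (herm_exp_inj (isHermitian_conj_unitary UB KB hKB).neg
      hKB.transpose.neg h3)
  have hABeq : (UA ⊗ₖ UB) * KAB * (UA ⊗ₖ UB)ᴴ = KABᵀ := by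
    have h3 : NormedSpace.exp (-((UA ⊗ₖ UB) * KAB * (UA ⊗ₖ UB)ᴴ))
        = NormedSpace.exp (-(KABᵀ)) := by
      rw [exp_neg_conj_unitary _ _ hVu, heAB,
        show -(KABᵀ) = (-KAB)ᵀ from (Matrix.transpose_neg KAB).symm,
        Matrix.exp_transpose, heAB, hVc, conjM_eq_transpose hρH]
    exact neg_inj.mp (herm_exp_inj (isHermitian_conj_unitary _ KAB hKAB).neg
      hKAB.transpose.neg h3)
  have hlu := J2_lu ρ KAB KA KB UA UB hUA hUB
  rw [hAeq, hBeq, hABeq, hVc] at hlu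
  have hodd := J2_conj_odd ρ KAB KA KB hρH
  have hfin : J2 ρ KA KB KAB = - J2 ρ KA KB KAB := hlu.symm.trans hodd
  linear_combination hfin / 2
end
end

section
/- Every n-qubit stabilizer state (pure or mixed) is n-partite non-chiral: there exists a Pauli string Q = Q₁ ⊗ ⋯ ⊗ Qₙ (each Qₓ ∈ {I,X,Y,Z}) such that Q ρ Q† = ρ*, where ρ* is complex conjugation in the computational basis. -/
/-!
Write a Pauli string `P_f` through its binary symplectic coordinates `(x | z) ∈ 𝔽₂ⁿ × 𝔽₂ⁿ`.
Complex conjugation fixes `X` and `Z` and negates `Y`, so `conj P_f = (-1)^{#Y(f)} P_f`, while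
conjugation by another Pauli string gives `P_g P_f P_g = (-1)^{ω(g, f)} P_f`, where `ω` is the
symplectic form. Hence `P_g ρ P_g = conj ρ` as soon as `ω(g, fᵢ) = #Y(fᵢ) (mod 2)` for every
generator. Independence of the generators says that their symplectic vectors are linearly
independent, and `ω` is nondegenerate, so this linear system over `𝔽₂` has a solution `g`.
-/

open Matrix Kronecker BigOperators
open scoped ComplexOrder

noncomputable section

/-- The four single-qubit Pauli matrices `I, X, Y, Z`. -/
def pauli : Fin 4 → Matrix (Fin 2) (Fin 2) ℂ :=
  ![1, !![0, 1; 1, 0], !![0, -Complex.I; Complex.I, 0], !![1, 0; 0, -1]]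

/-- A (phase-free) Pauli string `Q₁ ⊗ ⋯ ⊗ Qₙ` on `n` qubits. -/
def PauliString (n : ℕ) (f : Fin n → Fin 4) :
    Matrix (Fin n → Fin 2) (Fin n → Fin 2) ℂ :=
  fun i j => ∏ x, pauli (f x) (i x) (j x)

section PiKron

variable {ι m R : Type*} [Fintype ι] [CommRing R]

def piKron (M : ι → Matrix m m R) : Matrix (ι → m) (ι → m) R :=
  fun i j => ∏ x, M x (i x) (j x)

theorem piKron_one [DecidableEq ι] [DecidableEq m] :
    piKron (ι := ι) (fun _ => (1 : Matrix m m R)) = 1 := by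
  ext i j
  simp only [piKron, one_apply, Finset.prod_boole, funext_iff, Finset.mem_univ, true_implies]

theorem piKron_mul [DecidableEq ι] [Fintype m] (M N : ι → Matrix m m R) :
    piKron M * piKron N = piKron (M * N) := by
  ext i j
  simp only [piKron, mul_apply, Pi.mul_apply]
  rw [Finset.prod_univ_sum, Fintype.piFinset_univ]
  exact Finset.sum_congr rfl fun _ _ => Finset.prod_mul_distrib.symm

theorem piKron_smul (z : ι → R) (M : ι → Matrix m m R) :
    piKron (fun x => z x • M x) = (∏ x, z x) • piKron M := by
  ext i j
  simp only [piKron, Matrix.smul_apply, smul_eq_mul, Finset.prod_mul_distrib]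

theorem map_piKron {S : Type*} [CommRing S] (φ : R →+* S) (M : ι → Matrix m m R) :
    (piKron M).map φ = piKron fun x => (M x).map φ := by
  ext i j
  simp [piKron, map_prod]

theorem conjTranspose_piKron [StarRing R] (M : ι → Matrix m m R) :
    (piKron M)ᴴ = piKron fun x => (M x)ᴴ := by
  ext i j
  simp [piKron, conjTranspose_apply]

end PiKron

theorem AddChar.map_sum_eq_prod {ι A M : Type*} [AddCommMonoid A] [CommMonoid M]
    (ψ : AddChar A M) (s : Finset ι) (a : ι → A) : ψ (∑ i ∈ s, a i) = ∏ i ∈ s, ψ (a i) := by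
  induction s using Finset.cons_induction with
  | empty => simp
  | cons i s hi ih => rw [Finset.sum_cons, Finset.prod_cons, map_add_eq_mul, ih]

theorem List.prod_map_smul {ι R M : Type*} [CommMonoid R] [Monoid M] [MulAction R M]
    [IsScalarTower R M M] [SMulCommClass R M M] (l : List ι) (a : ι → R) (F : ι → M) :
    (l.map fun i => a i • F i).prod = (l.map a).prod • (l.map F).prod := by
  induction l with
  | nil => simp
  | cons i l ih => simp only [List.map_cons, List.prod_cons, ih, smul_mul_smul_comm]

theorem List.mul_prod_mul_of_mul_self_eq_one {M : Type*} [Monoid M] {q : M} (hq : q * q = 1)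
    (l : List M) : q * l.prod * q = (l.map fun a => q * a * q).prod := by
  induction l with
  | nil => simpa using hq
  | cons a l ih =>
    rw [List.map_cons, List.prod_cons, List.prod_cons, ← ih]
    simp only [mul_assoc, ← mul_assoc q q, hq, one_mul]

theorem Matrix.mulVec_surjective_of_linearIndependent_row {K m n : Type*} [Field K]
    [Fintype m] [Fintype n] {A : Matrix m n K} (h : LinearIndependent K A.row) :
    Function.Surjective A.mulVec := by
  have hrange : LinearMap.range A.mulVecLin = ⊤ :=
    Submodule.eq_top_of_finrank_eq <|
      h.rank_matrix.trans (Module.finrank_fintype_fun_eq_card K).symm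
  exact fun b => LinearMap.range_eq_top.mp hrange b

theorem conjM_eq_mapMatrix {α : Type*} [Fintype α] [DecidableEq α] (A : Matrix α α ℂ) :
    conjM A = (starRingEnd ℂ).mapMatrix A := rfl

theorem conjM_smul {α : Type*} (z : ℂ) (A : Matrix α α ℂ) :
    conjM (z • A) = starRingEnd ℂ z • conjM A :=
  Matrix.map_smul' _ z A (map_mul _)

theorem conjM_list_prod {α : Type*} [Fintype α] [DecidableEq α] (l : List (Matrix α α ℂ)) :
    conjM l.prod = (l.map conjM).prod :=
  map_list_prod (starRingEnd ℂ).mapMatrix l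

def signChar : AddChar (ZMod 2) ℂ where
  toFun a := (-1) ^ a.val
  map_zero_eq_one' := rfl
  map_add_eq_mul' a b := by
    rw [ZMod.val_add, ← pow_add, ← neg_one_pow_eq_pow_mod_two]

theorem signChar_one : signChar 1 = -1 := pow_one _

/-- The binary symplectic coordinates `(x, z)` of `I, X, Y, Z`, so that `pauli a` is
`Xˣ Zᶻ` up to a phase. -/
def pauliBits : Fin 4 ≃ ZMod 2 × ZMod 2 where
  toFun := ![(0, 0), (1, 0), (1, 1), (0, 1)]
  invFun p := if p.1 = 0 then (if p.2 = 0 then 0 else 3) else (if p.2 = 0 then 1 else 2)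
  left_inv := by decide
  right_inv := by decide

theorem pauliBits_symm_zero : pauliBits.symm 0 = 0 := rfl

def symplecticForm (p q : ZMod 2 × ZMod 2) : ZMod 2 := p.1 * q.2 + p.2 * q.1

def pauliPhase : Fin 4 → Fin 4 → ℂ :=
  ![![1, 1, 1, 1], ![1, 1, Complex.I, -Complex.I], ![1, -Complex.I, 1, Complex.I],
    ![1, Complex.I, -Complex.I, 1]]

theorem pauli_mul (a b : Fin 4) :
    pauli a * pauli b = pauliPhase a b • pauli (pauliBits.symm (pauliBits a + pauliBits b)) := by
  fin_cases a <;> fin_cases b <;> ext i j <;> fin_cases i <;> fin_cases j <;>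
    simp +decide [pauli, pauliPhase, pauliBits, mul_apply, Fin.sum_univ_two]

theorem pauli_mul_self (a : Fin 4) : pauli a * pauli a = 1 := by
  fin_cases a <;> ext i j <;> fin_cases i <;> fin_cases j <;>
    simp [pauli, mul_apply, Fin.sum_univ_two]

theorem conjTranspose_pauli (a : Fin 4) : (pauli a)ᴴ = pauli a := by
  fin_cases a <;> ext i j <;> fin_cases i <;> fin_cases j <;>
    simp [pauli, conjTranspose_apply]

theorem map_conj_pauli (a : Fin 4) :
    (pauli a).map (starRingEnd ℂ) = signChar ((pauliBits a).1 * (pauliBits a).2) • pauli a := by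
  fin_cases a <;> ext i j <;> fin_cases i <;> fin_cases j <;>
    simp +decide [pauli, pauliBits, signChar_one]

theorem pauli_mul_mul_self (a b : Fin 4) :
    pauli a * pauli b * pauli a =
      signChar (symplecticForm (pauliBits a) (pauliBits b)) • pauli b := by
  fin_cases a <;> fin_cases b <;> ext i j <;> fin_cases i <;> fin_cases j <;>
    simp +decide [pauli, pauliBits, signChar_one, symplecticForm, CharTwo.add_self_eq_zero,
      mul_apply, Fin.sum_univ_two]

section PauliString

variable {n : ℕ}

theorem pauliString_eq_piKron (f : Fin n → Fin 4) :
    PauliString n f = piKron fun x => pauli (f x) := rfl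

theorem pauliString_zero : PauliString n (fun _ => 0) = 1 := piKron_one

theorem pauliString_mul (g h : Fin n → Fin 4) :
    PauliString n g * PauliString n h = (∏ x, pauliPhase (g x) (h x)) •
      PauliString n fun x => pauliBits.symm (pauliBits (g x) + pauliBits (h x)) := by
  simp only [pauliString_eq_piKron, piKron_mul, ← piKron_smul]
  exact congrArg piKron (funext fun x => pauli_mul (g x) (h x))

theorem pauliString_mul_self (g : Fin n → Fin 4) : PauliString n g * PauliString n g = 1 := by
  simp only [pauliString_eq_piKron, piKron_mul]
  exact (congrArg piKron (funext fun x => pauli_mul_self (g x))).trans piKron_one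

theorem conjTranspose_pauliString (g : Fin n → Fin 4) :
    (PauliString n g)ᴴ = PauliString n g := by
  simp only [pauliString_eq_piKron, conjTranspose_piKron, conjTranspose_pauli]

theorem pauliString_mul_mul_self (g f : Fin n → Fin 4) :
    PauliString n g * PauliString n f * PauliString n g =
      signChar (∑ x, symplecticForm (pauliBits (g x)) (pauliBits (f x))) • PauliString n f := by
  simp only [pauliString_eq_piKron, piKron_mul, AddChar.map_sum_eq_prod, ← piKron_smul]
  exact congrArg piKron (funext fun x => pauli_mul_mul_self (g x) (f x))

theorem conjM_pauliString (f : Fin n → Fin 4) :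
    conjM (PauliString n f) =
      signChar (∑ x, (pauliBits (f x)).1 * (pauliBits (f x)).2) • PauliString n f := by
  simp only [conjM, pauliString_eq_piKron, map_piKron, map_conj_pauli,
    AddChar.map_sum_eq_prod, piKron_smul]

theorem pauliString_pow_val (f : Fin n → Fin 4) (e : ZMod 2) :
    PauliString n f ^ e.val = PauliString n fun x => pauliBits.symm (e • pauliBits (f x)) := by
  rcases (by decide : ∀ e : ZMod 2, e = 0 ∨ e = 1) e with rfl | rfl
  · simp [pauliBits_symm_zero, pauliString_zero]
  · simp only [one_smul, Equiv.symm_apply_apply]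
    exact pow_one _

theorem exists_list_prod_pauliString {ι : Type*} (l : List ι) (G : ι → Fin n → Fin 4) :
    ∃ z : ℂ, (l.map fun j => PauliString n (G j)).prod =
      z • PauliString n fun x => pauliBits.symm (l.map fun j => pauliBits (G j x)).sum := by
  induction l with
  | nil => exact ⟨1, by simp [pauliBits_symm_zero, pauliString_zero]⟩
  | cons j l ih =>
    obtain ⟨z, hz⟩ := ih
    refine ⟨z * ∏ x, pauliPhase (G j x)
      (pauliBits.symm (l.map fun j => pauliBits (G j x)).sum), ?_⟩
    simp only [List.map_cons, List.prod_cons, List.sum_cons, hz, mul_smul_comm,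
      pauliString_mul, Equiv.apply_symm_apply, smul_smul]

end PauliString

theorem pauliString_mul_mul_self_eq_conjM {n : ℕ} {g f : Fin n → Fin 4}
    (h : ∑ x, symplecticForm (pauliBits (g x)) (pauliBits (f x)) =
      ∑ x, (pauliBits (f x)).1 * (pauliBits (f x)).2) :
    PauliString n g * PauliString n f * PauliString n g = conjM (PauliString n f) := by
  rw [pauliString_mul_mul_self, h, conjM_pauliString]

/-- `ω(g, f)` is the dot product of the coordinates of `g` with those of `f` with `x` and `z`
swapped, so the system `ω(g, fᵢ) = bᵢ` has a coefficient matrix with independent rows. -/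
theorem exists_symplecticForm_eq {n k : ℕ} {f : Fin k → Fin n → Fin 4}
    (hf : LinearIndependent (ZMod 2) fun i x => pauliBits (f i x)) (b : Fin k → ZMod 2) :
    ∃ g : Fin n → Fin 4, ∀ i, ∑ x, symplecticForm (pauliBits (g x)) (pauliBits (f i x)) = b i := by
  set A : Matrix (Fin k) (Fin n ⊕ Fin n) (ZMod 2) :=
    of fun i => Sum.elim (fun x => (pauliBits (f i x)).2) (fun x => (pauliBits (f i x)).1)
  have hA : LinearIndependent (ZMod 2) A.row := by
    rw [Fintype.linearIndependent_iff] at hf ⊢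
    intro t ht
    refine hf t (funext fun x => Prod.ext ?_ ?_)
    · simpa [A, Finset.sum_apply, Prod.fst_sum] using congrFun ht (Sum.inr x)
    · simpa [A, Finset.sum_apply, Prod.snd_sum] using congrFun ht (Sum.inl x)
  obtain ⟨v, hv⟩ := A.mulVec_surjective_of_linearIndependent_row hA b
  refine ⟨fun x => pauliBits.symm (v (Sum.inl x), v (Sum.inr x)), fun i => ?_⟩
  rw [← hv]
  simp [A, mulVec, dotProduct, Fintype.sum_sum_type, symplecticForm, Finset.sum_add_distrib,
    mul_comm]

theorem linearIndependent_pauliBits {n k : ℕ} {c : Fin k → ℂ} {f : Fin k → Fin n → Fin 4}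
    {S : Fin k → Matrix (Fin n → Fin 2) (Fin n → Fin 2) ℂ}
    (hS : ∀ i, S i = c i • PauliString n (f i))
    (hind : ∀ v : Fin k → ZMod 2,
      (∃ z : ℂ, ((List.finRange k).map fun i => S i ^ (v i).val).prod = z • 1) → v = 0) :
    LinearIndependent (ZMod 2) fun i x => pauliBits (f i x) := by
  rw [Fintype.linearIndependent_iff]
  intro t ht
  refine congrFun (hind t ?_)
  obtain ⟨z, hz⟩ := exists_list_prod_pauliString (List.finRange k)
    fun i x => pauliBits.symm (t i • pauliBits (f i x))
  have hsum : ∀ x, ((List.finRange k).map fun i => t i • pauliBits (f i x)).sum = 0 := by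
    intro x
    rw [← Fin.sum_univ_def]
    simpa [Finset.sum_apply] using congrFun ht x
  refine ⟨((List.finRange k).map fun i => c i ^ (t i).val).prod * z, ?_⟩
  simp only [hS, smul_pow, pauliString_pow_val, List.prod_map_smul, hz, Equiv.apply_symm_apply,
    hsum, pauliBits_symm_zero, pauliString_zero, smul_smul]

theorem mul_smul_prod_one_add_mul_eq_conjM {ι α : Type*} [Fintype α] [DecidableEq α]
    {Q : Matrix α α ℂ} (hQ : Q * Q = 1) {S : ι → Matrix α α ℂ}
    (hS : ∀ i, Q * S i * Q = conjM (S i)) {z : ℂ} (hz : starRingEnd ℂ z = z) (l : List ι) :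
    Q * (z • (l.map fun i => 1 + S i).prod) * Q = conjM (z • (l.map fun i => 1 + S i).prod) := by
  have hQ_one_add : ∀ i, Q * (1 + S i) * Q = conjM (1 + S i) := fun i => by
    rw [mul_add, add_mul, mul_one, hQ, hS, conjM_eq_mapMatrix, conjM_eq_mapMatrix, map_add,
      map_one]
  rw [mul_smul_comm, smul_mul_assoc, List.mul_prod_mul_of_mul_self_eq_one hQ, conjM_smul, hz,
    conjM_list_prod, List.map_map, List.map_map]
  exact congrArg _ (congrArg List.prod (List.map_congr_left fun i _ => hQ_one_add i))

theorem stmt_12_general {n k : ℕ} (c : Fin k → ℂ) (hc : ∀ i, c i = 1 ∨ c i = -1)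
    (f : Fin k → Fin n → Fin 4)
    (S : Fin k → Matrix (Fin n → Fin 2) (Fin n → Fin 2) ℂ)
    (hS : ∀ i, S i = c i • PauliString n (f i))
    (hind : ∀ v : Fin k → ZMod 2,
      (∃ z : ℂ, ((List.finRange k).map fun i => S i ^ (v i).val).prod
          = z • (1 : Matrix (Fin n → Fin 2) (Fin n → Fin 2) ℂ)) → v = 0)
    (ρ : Matrix (Fin n → Fin 2) (Fin n → Fin 2) ℂ)
    (hρ : ρ = ((2 : ℂ) ^ n)⁻¹ • ((List.finRange k).map fun i => 1 + S i).prod) :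
    ∃ g : Fin n → Fin 4,
      PauliString n g * ρ * (PauliString n g)ᴴ = conjM ρ := by
  obtain ⟨g, hg⟩ := exists_symplecticForm_eq (linearIndependent_pauliBits hS hind)
    fun i => ∑ x, (pauliBits (f i x)).1 * (pauliBits (f i x)).2
  refine ⟨g, ?_⟩
  have hQS : ∀ i, PauliString n g * S i * PauliString n g = conjM (S i) := fun i => by
    have hc_real : starRingEnd ℂ (c i) = c i := by rcases hc i with h | h <;> simp [h]
    rw [hS, mul_smul_comm, smul_mul_assoc, pauliString_mul_mul_self_eq_conjM (hg i), conjM_smul,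
      hc_real]
  rw [conjTranspose_pauliString, hρ]
  exact mul_smul_prod_one_add_mul_eq_conjM (pauliString_mul_self g) hQS
    (by rw [map_inv₀, map_pow, Complex.conj_ofNat]) _

/-- every `n`-qubit stabilizer state (pure or mixed),
`ρ = 2^{-n} ∏ᵢ (1 + Sᵢ)` for independent mutually commuting signed Pauli strings `Sᵢ`
squaring to the identity, is `n`-partite non-chiral: there is a Pauli string `Q` with
`Q ρ Q† = ρ*` (complex conjugation in the computational basis). -/
theorem stmt_12 {n k : ℕ} (c : Fin k → ℂ) (hc : ∀ i, c i = 1 ∨ c i = -1)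
    (f : Fin k → Fin n → Fin 4)
    (S : Fin k → Matrix (Fin n → Fin 2) (Fin n → Fin 2) ℂ)
    (hS : ∀ i, S i = c i • PauliString n (f i))
    (hcomm : ∀ i j, S i * S j = S j * S i)
    (hsq : ∀ i, S i * S i = 1)
    (hind : ∀ v : Fin k → ZMod 2,
      (∃ z : ℂ, ((List.finRange k).map fun i => S i ^ (v i).val).prod
          = z • (1 : Matrix (Fin n → Fin 2) (Fin n → Fin 2) ℂ)) → v = 0)
    (ρ : Matrix (Fin n → Fin 2) (Fin n → Fin 2) ℂ)
    (hρ : ρ = ((2 : ℂ) ^ n)⁻¹ • ((List.finRange k).map fun i => 1 + S i).prod) :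
    ∃ g : Fin n → Fin 4,
      PauliString n g * ρ * (PauliString n g)ᴴ = conjM ρ :=
  stmt_12_general c hc f S hS hind ρ hρ
end
end

section
/- If an n-qubit pure state ψ is expanded as ψ = Σ_s a_s ψ_s in the simultaneous eigenbasis {ψ_s} of a full stabilizer group (with Q a Pauli string satisfying Q ψ_s = ψ_s* for all s), then |⟨ψ*| Q S₁^{v₁}⋯Sₙ^{vₙ} |ψ⟩|² averaged over all v ∈ 𝔽₂ⁿ equals Σ_s |a_s|⁴. -/
open Matrix Kronecker BigOperators
open scoped ComplexOrder

noncomputable section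

lemma mulVec_sum'' {m k : Type*} [Fintype m] [Fintype k] (M : Matrix m m ℂ)
    (w : k → m → ℂ) : M.mulVec (∑ s, w s) = ∑ s, M.mulVec (w s) := by
  simp only [← Matrix.mulVecLin_apply]
  exact map_sum (Matrix.mulVecLin M) w Finset.univ

lemma dotProduct_sum'' {m k : Type*} [Fintype m] [Fintype k] (u : m → ℂ)
    (w : k → m → ℂ) : dotProduct u (∑ s, w s) = ∑ s, dotProduct u (w s) := by
  simp only [dotProduct, Finset.sum_apply, Finset.mul_sum]
  exact Finset.sum_comm

lemma chi_orth'' {n : ℕ} (s t : Fin n → Bool) :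
    ∑ v : Fin n → Bool, (∏ i, if v i && s i then (-1:ℂ) else 1) * (∏ i, if v i && t i then (-1:ℂ) else 1)
      = if s = t then (2:ℂ)^n else 0 := by
  classical
  have h1 : ∀ v : Fin n → Bool, (∏ i, if v i && s i then (-1:ℂ) else 1) * (∏ i, if v i && t i then (-1:ℂ) else 1)
      = ∏ i, ((if v i && s i then (-1:ℂ) else 1) * (if v i && t i then (-1:ℂ) else 1)) := by
    intro v; rw [Finset.prod_mul_distrib]
  simp only [h1]
  rw [← Fintype.piFinset_univ, ← Finset.prod_univ_sum (fun _ => Finset.univ)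
      (fun i b => (if b && s i then (-1:ℂ) else 1) * (if b && t i then (-1:ℂ) else 1))]
  have hfac : ∀ i, (∑ b : Bool, (if b && s i then (-1:ℂ) else 1) * (if b && t i then (-1:ℂ) else 1))
      = if s i = t i then 2 else 0 := by
    intro i
    rcases hsi : s i <;> rcases hti : t i <;>
      simp [Fintype.sum_bool, hsi, hti] <;> norm_num
  simp only [hfac]
  by_cases hst : s = t
  · subst hst; simp [Finset.prod_const]
  · obtain ⟨i, hi⟩ := Function.ne_iff.mp hst
    rw [if_neg hst]
    exact Finset.prod_eq_zero (Finset.mem_univ i) (by simp [hi])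

lemma avg_lemma'' {n : ℕ} (χ : (Fin n → Bool) → (Fin n → Bool) → ℂ) (a : (Fin n → Bool) → ℂ)
    (hreal : ∀ v s, (starRingEnd ℂ) (χ v s) = χ v s)
    (horth : ∀ s t, ∑ v : Fin n → Bool, χ v s * χ v t = if s = t then (2:ℂ)^n else 0) :
    ((2 : ℝ) ^ n)⁻¹ * ∑ v : Fin n → Bool, ‖∑ s, χ v s * (a s * a s)‖ ^ 2
      = ∑ s, ‖a s‖ ^ 4 := by
  classical
  have key : ((∑ v : Fin n → Bool, ‖∑ s, χ v s * (a s * a s)‖ ^ 2 : ℝ) : ℂ)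
      = (2:ℂ)^n * ∑ s, (‖a s‖:ℂ) ^ 4 := by
    push_cast
    have hterm : ∀ v : Fin n → Bool, ((‖∑ s, χ v s * (a s * a s)‖:ℂ)) ^ 2
        = ∑ s, ∑ t, (χ v s * χ v t) * ((a s * a s) * (starRingEnd ℂ) (a t * a t)) := by
      intro v
      rw [← Complex.mul_conj']
      rw [map_sum, Finset.sum_mul_sum]
      apply Finset.sum_congr rfl; intro s _
      apply Finset.sum_congr rfl; intro t _
      rw [_root_.map_mul, hreal]
      ring
    simp only [hterm]
    rw [Finset.sum_comm]
    have hinner : ∀ s : Fin n → Bool,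
        (∑ v : Fin n → Bool, ∑ t, (χ v s * χ v t) * ((a s * a s) * (starRingEnd ℂ) (a t * a t)))
        = (2:ℂ)^n * ((‖a s‖:ℂ))^4 := by
      intro s
      rw [Finset.sum_comm]
      have h2 : ∀ t, (∑ v : Fin n → Bool, (χ v s * χ v t) * ((a s * a s) * (starRingEnd ℂ) (a t * a t)))
          = (if s = t then (2:ℂ)^n else 0) * ((a s * a s) * (starRingEnd ℂ) (a t * a t)) := by
        intro t
        rw [← Finset.sum_mul, horth]
      simp only [h2, ite_mul, zero_mul]
      rw [Finset.sum_ite_eq Finset.univ s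
        (fun t => (2:ℂ)^n * ((a s * a s) * (starRingEnd ℂ) (a t * a t)))]
      simp only [Finset.mem_univ, if_true]
      rw [_root_.map_mul, mul_mul_mul_comm, Complex.mul_conj']
      ring
    rw [Finset.sum_congr rfl fun s _ => hinner s, ← Finset.mul_sum]
  have keyR : (∑ v : Fin n → Bool, ‖∑ s, χ v s * (a s * a s)‖ ^ 2 : ℝ)
      = (2:ℝ)^n * ∑ s, ‖a s‖ ^ 4 := by
    apply Complex.ofReal_injective
    rw [key]
    push_cast
    ring
  rw [keyR]
  rw [← mul_assoc, inv_mul_cancel₀ (by positivity), one_mul]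

/-- expanding an `n`-qubit state `ψ = Σ_s a_s ψ_s` in the simultaneous
eigenbasis `{ψ_s}` of a full set of commuting Pauli strings `S₁,…,Sₙ` (with `Q` a Pauli
string satisfying `Q ψ_s = ψ_s*`), the average of `|⟨ψ*| Q S₁^{v₁}⋯Sₙ^{vₙ} |ψ⟩|²` over
all `v ∈ 𝔽₂ⁿ` equals `Σ_s |a_s|⁴`. -/
theorem stmt_14 {n : ℕ} (f : Fin n → Fin n → Fin 4) (g : Fin n → Fin 4)
    (ψb : (Fin n → Bool) → (Fin n → Fin 2) → ℂ)
    (horth : ∀ s t, dotProduct (star (ψb s)) (ψb t) = if s = t then 1 else 0)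
    (hcomm : ∀ i j, PauliString n (f i) * PauliString n (f j)
      = PauliString n (f j) * PauliString n (f i))
    (hsq : ∀ i, PauliString n (f i) * PauliString n (f i) = 1)
    (heig : ∀ i s, (PauliString n (f i)).mulVec (ψb s)
      = (if s i then (-1 : ℂ) else 1) • ψb s)
    (hQ : ∀ s, (PauliString n g).mulVec (ψb s) = star (ψb s))
    (a : (Fin n → Bool) → ℂ) (ψ : (Fin n → Fin 2) → ℂ)
    (hexp : ψ = ∑ s, a s • ψb s) :
    ((2 : ℝ) ^ n)⁻¹ * ∑ v : Fin n → Bool,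
        ‖dotProduct ψ
          ((PauliString n g *
            ((List.finRange n).map fun i =>
              if v i then PauliString n (f i) else 1).prod).mulVec ψ)‖ ^ 2
      = ∑ s, ‖a s‖ ^ 4 := by
  classical
  have hM : ∀ (v s : Fin n → Bool),
      (((List.finRange n).map fun i => if v i then PauliString n (f i) else 1).prod).mulVec (ψb s)
        = (∏ i, if v i && s i then (-1:ℂ) else 1) • ψb s := by
    intro v s
    rw [Fin.prod_univ_def]
    induction (List.finRange n) with
    | nil => simp
    | cons i l ih =>
      simp only [List.map_cons, List.prod_cons, ← Matrix.mulVec_mulVec, ih, Matrix.mulVec_smul]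
      by_cases hv : v i
      · by_cases hs : s i <;> simp [hv, hs, heig i s, smul_smul, mul_comm]
      · simp [hv]
  have hdp : ∀ s, dotProduct ψ (star (ψb s)) = a s := by
    intro s
    rw [dotProduct_comm]
    conv_lhs => rw [hexp]
    rw [dotProduct_sum'']
    simp [dotProduct_smul, horth, Finset.sum_ite_eq']
  have hinner : ∀ v : Fin n → Bool,
      dotProduct ψ ((PauliString n g *
          ((List.finRange n).map fun i => if v i then PauliString n (f i) else 1).prod).mulVec ψ)
        = ∑ s, (∏ i, if v i && s i then (-1:ℂ) else 1) * (a s * a s) := by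
    intro v
    have hvec : (PauliString n g *
          ((List.finRange n).map fun i => if v i then PauliString n (f i) else 1).prod).mulVec ψ
        = ∑ s, (a s * ∏ i, if v i && s i then (-1:ℂ) else 1) • star (ψb s) := by
      rw [← Matrix.mulVec_mulVec]
      conv_lhs => rw [hexp]
      rw [mulVec_sum'']
      simp only [Matrix.mulVec_smul, hM, smul_smul]
      rw [mulVec_sum'']
      simp only [Matrix.mulVec_smul, hQ]
    rw [hvec, dotProduct_sum'']
    simp only [dotProduct_smul, hdp, smul_eq_mul]
    apply Finset.sum_congr rfl
    intro s _
    ring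
  simp only [hinner]
  apply avg_lemma''
  · intro v s
    rw [map_prod]
    apply Finset.prod_congr rfl
    intro i _
    rw [apply_ite (starRingEnd ℂ)]
    simp
  · exact chi_orth''
end
end
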